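/- arXiv:1103.3917 — 4 statements merged into one kernel-verified Lean document; each statement's English description precedes it below -/
import Mathlib

section
/- For every n ≥ 5, Q(n, n-2) ≤ n-3. In particular, the graph obtained from the complete graph K_n by removing the edges of a 5-cycle on 5 of its vertices has chromatic number n-2 and clique number n-3. -/
open SimpleGraph

noncomputable def indepNum {V : Type} (G : SimpleGraph V) : ℕ :=
  Gᶜ.cliqueNum

noncomputable def Q (n c : ℕ) : ℕ :=
  sInf {w | ∃ G : SimpleGraph (Fin n), G.chromaticNumber = (c : ℕ∞) ∧ G.cliqueNum = w}

noncomputable def omega' (x : ℕ) : ℕ :=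
  sInf {w | ∃ G : SimpleGraph (Fin x), _root_.indepNum G ≤ 2 ∧ G.cliqueNum = w}

noncomputable def q (k : ℕ) : ℕ :=
  sInf {m | ∃ L : List ℕ, (∀ i ∈ L, 0 < i) ∧ L.sum = k ∧
    (L.map fun i => omega' (2*i+1) - 1).sum = m}

noncomputable def R3 (l : ℕ) : ℕ :=
  sInf {R | ∀ n, R ≤ n → ∀ G : SimpleGraph (Fin n),
    (∃ s : Finset (Fin n), Gᶜ.IsNClique 3 s) ∨ (∃ s : Finset (Fin n), G.IsNClique l s)}

noncomputable def matchingNum {V : Type} (G : SimpleGraph V) : ℕ :=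
  sSup {k | ∃ M : G.Subgraph, M.IsMatching ∧ M.verts.ncard = 2*k}


open SimpleGraph Finset

def badPair (a b : ℕ) : Prop := a < 5 ∧ b < 5 ∧ ((a+1)%5 = b ∨ (b+1)%5 = a)

instance : DecidablePred (fun p : ℕ × ℕ => badPair p.1 p.2) := by
  intro p; unfold badPair; infer_instance

instance (a b : ℕ) : Decidable (badPair a b) := by unfold badPair; infer_instance

def myG (n : ℕ) : SimpleGraph (Fin n) where
  Adj u v := u ≠ v ∧ ¬ badPair u.val v.val
  symm := by
    constructor; intro u v ⟨h1, h2⟩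
    exact ⟨h1.symm, fun h => h2 ⟨h.2.1, h.1, h.2.2.symm⟩⟩
  loopless := by constructor; intro u ⟨h1, _⟩; exact h1 rfl

def colf : ℕ → ℕ
  | 0 => 0 | 1 => 1 | 2 => 1 | 3 => 2 | 4 => 0 | (m+5) => m+3

lemma colf_ge (m : ℕ) : colf (m+5) = m+3 := rfl

lemma colf_le2 {a : ℕ} (h : a < 5) : colf a ≤ 2 := by
  interval_cases a <;> decide

lemma colf_valid {a b : ℕ} (hab : a ≠ b) (h : ¬ badPair a b) : colf a ≠ colf b := by
  rcases lt_or_ge a 5 with ha | ha <;> rcases lt_or_ge b 5 with hb | hb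
  · interval_cases a <;> interval_cases b <;> revert h hab <;> decide
  · obtain ⟨m, rfl⟩ : ∃ m, b = m + 5 := ⟨b - 5, by omega⟩
    have := colf_le2 ha; rw [colf_ge]; omega
  · obtain ⟨m, rfl⟩ : ∃ m, a = m + 5 := ⟨a - 5, by omega⟩
    have := colf_le2 hb; rw [colf_ge]; omega
  · obtain ⟨m, rfl⟩ : ∃ m, a = m + 5 := ⟨a - 5, by omega⟩
    obtain ⟨k, rfl⟩ : ∃ k, b = k + 5 := ⟨b - 5, by omega⟩
    rw [colf_ge, colf_ge]; omega

lemma myG_colorable {n : ℕ} (hn : 5 ≤ n) : (myG n).Colorable (n - 2) := by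
  refine ⟨Coloring.mk (fun v => ⟨colf v.val, ?_⟩) ?_⟩
  · rcases lt_or_ge v.val 5 with h | h
    · have := colf_le2 h; omega
    · obtain ⟨m, hm⟩ : ∃ m, v.val = m + 5 := ⟨v.val - 5, by omega⟩
      have := v.isLt; rw [hm, colf_ge]; omega
  · intro u v huv h
    have h2 : colf u.val = colf v.val := by simpa [Fin.ext_iff] using h
    exact colf_valid (fun he => huv.1 (Fin.ext he)) huv.2 h2

lemma card_low {n : ℕ} (hn : 5 ≤ n) :
    (univ.filter (fun v : Fin n => v.val < 5)).card = 5 := by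
  have : univ.filter (fun v : Fin n => v.val < 5)
      = (univ : Finset (Fin 5)).map (Fin.castLEEmb hn) := by
    ext v
    simp only [mem_filter, mem_univ, true_and, mem_map]
    constructor
    · intro h; exact ⟨⟨v.val, h⟩, by simp [Fin.castLEEmb, Fin.ext_iff]⟩
    · rintro ⟨i, rfl⟩; simpa [Fin.castLEEmb] using i.isLt
  rw [this, card_map, card_univ, Fintype.card_fin]

lemma myG_not_colorable {n : ℕ} (hn : 5 ≤ n) : ¬ (myG n).Colorable (n - 3) := by
  rintro ⟨c⟩
  -- fibers
  set F : Fin (n-3) → Finset (Fin n) := fun b => univ.filter (fun v => c v = b) with hF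
  have hnonadj : ∀ u v : Fin n, u ≠ v → c u = c v → badPair u.val v.val := by
    intro u v huv hc
    by_contra hb
    exact c.valid ⟨huv, hb⟩ hc
  have hcard2 : ∀ b, (F b).card ≤ 2 := by
    intro b
    by_contra h
    have h3 : 2 < (F b).card := by omega
    obtain ⟨x, hx, y, hy, z, hz, hxy, hxz, hyz⟩ := Finset.two_lt_card.mp h3
    simp only [hF, mem_filter, mem_univ, true_and] at hx hy hz
    have h1 := hnonadj x y hxy (hx.trans hy.symm)
    have h2 := hnonadj x z hxz (hx.trans hz.symm)
    have h3 := hnonadj y z hyz (hy.trans hz.symm)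
    have hxyv : x.val ≠ y.val := fun h => hxy (Fin.ext h)
    have hxzv : x.val ≠ z.val := fun h => hxz (Fin.ext h)
    have hyzv : y.val ≠ z.val := fun h => hyz (Fin.ext h)
    unfold badPair at h1 h2 h3
    omega
  have hlow : ∀ b, (F b).card = 2 → F b ⊆ univ.filter (fun v : Fin n => v.val < 5) := by
    intro b h2
    obtain ⟨x, y, hxy, hxyeq⟩ := Finset.card_eq_two.mp h2
    have hx : x ∈ F b := by rw [hxyeq]; simp
    have hy : y ∈ F b := by rw [hxyeq]; simp
    simp only [hF, mem_filter, mem_univ, true_and] at hx hy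
    have hb := hnonadj x y hxy (hx.trans hy.symm)
    intro v hv
    rw [hxyeq] at hv
    simp only [mem_insert, mem_singleton] at hv
    simp only [mem_filter, mem_univ, true_and]
    rcases hv with rfl | rfl
    · exact hb.1
    · exact hb.2.1
  set T : Finset (Fin (n-3)) := univ.filter (fun b => (F b).card = 2) with hT
  have hdisj : (T : Set (Fin (n-3))).PairwiseDisjoint F := by
    intro a ha b hb hab
    simp only [hF, Finset.disjoint_left, mem_filter, mem_univ, true_and]
    intro v hv hv2
    exact hab (hv.symm.trans hv2)
  have hsumT : ∑ b ∈ T, (F b).card = 2 * T.card := by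
    rw [Finset.sum_congr rfl (fun b hb => (Finset.mem_filter.mp hb).2)]
    simp [mul_comm]
    rfl
  have hunion : (T.biUnion F).card = ∑ b ∈ T, (F b).card := Finset.card_biUnion hdisj
  have hsub : T.biUnion F ⊆ univ.filter (fun v : Fin n => v.val < 5) := by
    intro v hv
    obtain ⟨b, hb, hvb⟩ := Finset.mem_biUnion.mp hv
    exact hlow b (Finset.mem_filter.mp hb).2 hvb
  have h5 : ∑ b ∈ T, (F b).card ≤ 5 := by
    rw [← hunion]
    calc (T.biUnion F).card ≤ _ := Finset.card_le_card hsub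
    _ = 5 := card_low hn
  have htot : ∑ b : Fin (n-3), (F b).card = n := by
    rw [hF]
    rw [← Finset.card_eq_sum_card_fiberwise (fun v _ => Finset.mem_univ (c v))]
    simp
  have hsplit : ∑ b : Fin (n-3), (F b).card
      = ∑ b ∈ T, (F b).card + ∑ b ∈ univ.filter (fun b => ¬ (F b).card = 2), (F b).card := by
    rw [hT]; exact (Finset.sum_filter_add_sum_filter_not univ _ _).symm
  have hrest : ∑ b ∈ univ.filter (fun b => ¬ (F b).card = 2), (F b).card
      ≤ (univ.filter (fun b : Fin (n-3) => ¬ (F b).card = 2)).card := by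
    calc ∑ b ∈ univ.filter (fun b : Fin (n-3) => ¬ (F b).card = 2), (F b).card
        ≤ ∑ _b ∈ univ.filter (fun b : Fin (n-3) => ¬ (F b).card = 2), 1 := by
          apply Finset.sum_le_sum
          intro b hb
          have := hcard2 b
          have := (Finset.mem_filter.mp hb).2
          omega
    _ = _ := by simp
  have hTcards : T.card + (univ.filter (fun b : Fin (n-3) => ¬ (F b).card = 2)).card = n - 3 := by
    rw [hT, Finset.card_filter_add_card_filter_not]
    simp
  omega

lemma myG_chromatic {n : ℕ} (hn : 5 ≤ n) :
    (myG n).chromaticNumber = ((n - 2 : ℕ) : ℕ∞) := by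
  apply le_antisymm
  · exact chromaticNumber_le_iff_colorable.mpr (myG_colorable hn)
  · by_contra h
    push_neg at h
    have h2 : (myG n).chromaticNumber ≤ ((n - 3 : ℕ) : ℕ∞) := by
      have he : (n - 2) = (n - 3) + 1 := by omega
      rw [he, Nat.cast_add, Nat.cast_one] at h
      exact Order.le_of_lt_add_one h
    exact myG_not_colorable hn (chromaticNumber_le_iff_colorable.mp h2)

lemma myG_cliqueNum {n : ℕ} (hn : 5 ≤ n) : (myG n).cliqueNum = n - 3 := by
  apply le_antisymm
  · -- every clique has size ≤ n - 3
    obtain ⟨s, hs, hcard⟩ := (myG n).exists_isNClique_cliqueNum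
    rw [← hcard]
    have hlow : (s.filter (fun v : Fin n => v.val < 5)).card ≤ 2 := by
      by_contra h
      have h3 : 2 < (s.filter (fun v : Fin n => v.val < 5)).card := by omega
      obtain ⟨x, hx, y, hy, z, hz, hxy, hxz, hyz⟩ := Finset.two_lt_card.mp h3
      simp only [mem_filter] at hx hy hz
      have a1 := hs hx.1 hy.1 hxy
      have a2 := hs hx.1 hz.1 hxz
      have a3 := hs hy.1 hz.1 hyz
      have hxyv : x.val ≠ y.val := fun h => hxy (Fin.ext h)
      have hxzv : x.val ≠ z.val := fun h => hxz (Fin.ext h)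
      have hyzv : y.val ≠ z.val := fun h => hyz (Fin.ext h)
      have b1 := a1.2; have b2 := a2.2; have b3 := a3.2
      unfold badPair at b1 b2 b3
      have := hx.2; have := hy.2; have := hz.2
      omega
    have hhigh : (s.filter (fun v : Fin n => ¬ v.val < 5)).card ≤ n - 5 := by
      have hsub : s.filter (fun v : Fin n => ¬ v.val < 5)
          ⊆ univ.filter (fun v : Fin n => ¬ v.val < 5) := by
        intro v hv
        rw [Finset.mem_filter] at hv ⊢
        exact ⟨Finset.mem_univ v, hv.2⟩
      have hc := Finset.card_le_card hsub
      have h1 : (univ.filter (fun v : Fin n => v.val < 5)).card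
          + (univ.filter (fun v : Fin n => ¬ v.val < 5)).card = n := by
        rw [Finset.card_filter_add_card_filter_not]; simp
      have := card_low (n := n) hn
      omega
    have := Finset.card_filter_add_card_filter_not
      (s := s) (p := fun v : Fin n => v.val < 5)
    omega
  · -- a clique of size n - 3
    set s : Finset (Fin n) :=
      univ.filter (fun v : Fin n => v.val = 0 ∨ v.val = 2 ∨ 5 ≤ v.val) with hsdef
    have hclique : (myG n).IsClique s := by
      intro u hu v hv huv
      simp only [hsdef, Finset.coe_filter, Set.mem_setOf_eq, mem_univ, true_and] at hu hv
      refine ⟨huv, ?_⟩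
      have huvv : u.val ≠ v.val := fun h => huv (Fin.ext h)
      unfold badPair
      omega
    have hcard : s.card = n - 3 := by
      have hcompl : (univ.filter (fun v : Fin n => ¬(v.val = 0 ∨ v.val = 2 ∨ 5 ≤ v.val))).card
          = 3 := by
        have : univ.filter (fun v : Fin n => ¬(v.val = 0 ∨ v.val = 2 ∨ 5 ≤ v.val))
            = {⟨1, by omega⟩, ⟨3, by omega⟩, ⟨4, by omega⟩} := by
          ext v
          simp only [mem_filter, mem_univ, true_and, mem_insert, mem_singleton, Fin.ext_iff]
          omega
        rw [this]
        rw [Finset.card_insert_of_notMem (by simp [Fin.ext_iff]),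
          Finset.card_insert_of_notMem (by simp [Fin.ext_iff]), Finset.card_singleton]
      have h1 : s.card + (univ.filter (fun v : Fin n => ¬(v.val = 0 ∨ v.val = 2 ∨ 5 ≤ v.val))).card
          = n := by
        rw [hsdef, Finset.card_filter_add_card_filter_not]; simp
      omega
    calc n - 3 = s.card := hcard.symm
    _ ≤ _ := IsClique.card_le_cliqueNum (tc := hclique)

theorem stmt2 : ∀ n : ℕ, 5 ≤ n → Q n (n - 2) ≤ n - 3 ∧
    ∃ G : SimpleGraph (Fin n), G.chromaticNumber = ((n - 2 : ℕ) : ℕ∞) ∧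
      G.cliqueNum = n - 3 := by
  intro n hn
  have hG : ∃ G : SimpleGraph (Fin n), G.chromaticNumber = ((n - 2 : ℕ) : ℕ∞) ∧
      G.cliqueNum = n - 3 := ⟨myG n, myG_chromatic hn, myG_cliqueNum hn⟩
  refine ⟨Nat.sInf_le ?_, hG⟩
  obtain ⟨G, h1, h2⟩ := hG
  exact ⟨G, h1, h2⟩
end

section
/- (Xu–Xie–Radziszowski) If ω₁ ≥ ω₂ ≥ 1 are integers, then (R(3, ω₁+1) − 1) + (R(3, ω₂+1) − 1) + ω₂ ≤ R(3, ω₁+ω₂+1) − 1. -/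
open SimpleGraph

namespace XXR

def S (l : ℕ) : Set ℕ :=
  {R | ∀ n, R ≤ n → ∀ G : SimpleGraph (Fin n),
    (∃ s : Finset (Fin n), Gᶜ.IsNClique 3 s) ∨ (∃ s : Finset (Fin n), G.IsNClique l s)}

lemma R3_eq (l : ℕ) : R3 l = sInf (S l) := rfl

lemma isNClique_comap_map {α β : Type} {f : α → β} (hf : Function.Injective f)
    {G : SimpleGraph β} {k : ℕ} {s : Finset α} (h : (G.comap f).IsNClique k s) :
    G.IsNClique k (s.map ⟨f, hf⟩) := by
  constructor
  · rintro x hx y hy hxy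
    simp only [Finset.coe_map, Set.mem_image, Finset.mem_coe] at hx hy
    obtain ⟨a, ha, rfl⟩ := hx
    obtain ⟨b, hb, rfl⟩ := hy
    exact h.1 ha hb (fun hab => hxy (congrArg f hab))
  · rw [Finset.card_map]; exact h.2

lemma compl_comap {α β : Type} {f : α → β} (hf : Function.Injective f) (G : SimpleGraph β) :
    (G.comap f)ᶜ = Gᶜ.comap f := by
  ext a b
  simp only [compl_adj, comap_adj, hf.ne_iff]

lemma not_mem_S {l n : ℕ} {V : Type} (e : V ≃ Fin n) (G : SimpleGraph V)
    (h3 : ∀ s : Finset V, ¬ Gᶜ.IsNClique 3 s)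
    (hl : ∀ s : Finset V, ¬ G.IsNClique l s) : n ∉ S l := by
  intro hmem
  rcases hmem n le_rfl (G.comap e.symm) with ⟨s, hs⟩ | ⟨s, hs⟩
  · rw [compl_comap e.symm.injective] at hs
    exact h3 _ (isNClique_comap_map e.symm.injective hs)
  · exact hl _ (isNClique_comap_map e.symm.injective hs)

lemma S_upward {l a b : ℕ} (hab : a ≤ b) (ha : a ∈ S l) : b ∈ S l :=
  fun n hn G => ha n (hab.trans hn) G

lemma S_anti {l l' : ℕ} (h : l ≤ l') {R : ℕ} (hR : R ∈ S l') : R ∈ S l := by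
  intro n hn G
  rcases hR n hn G with h3 | ⟨s, hs⟩
  · exact Or.inl h3
  · obtain ⟨t, hts, ht⟩ := Finset.exists_subset_card_eq (h.trans hs.2.ge)
    exact Or.inr ⟨t, hs.1.subset (Finset.coe_subset.mpr hts), ht⟩

lemma adj_of_not_compl {α : Type} {G : SimpleGraph α} {a b : α}
    (hne : a ≠ b) (h : ¬ Gᶜ.Adj a b) : G.Adj a b := by
  by_contra h'
  exact h ⟨hne, h'⟩

lemma ramsey_key : ∀ (l : ℕ) (V : Type) [Fintype V] (G : SimpleGraph V),
    (∀ s : Finset V, ¬ Gᶜ.IsNClique 3 s) → l * l ≤ Fintype.card V →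
    ∃ s : Finset V, G.IsNClique l s := by
  intro l
  induction l with
  | zero =>
    intro V _ G _ _
    exact ⟨∅, by simp [isNClique_empty]⟩
  | succ l ih =>
    intro V _ G h3 hcard
    classical
    have hpos : 0 < Fintype.card V :=
      lt_of_lt_of_le (Nat.mul_pos l.succ_pos l.succ_pos) hcard
    obtain ⟨v⟩ := Fintype.card_pos_iff.mp hpos
    set NN := Finset.univ.filter (fun u => u ≠ v ∧ ¬ G.Adj v u) with hNNdef
    have hNNcl : ∀ a ∈ NN, ∀ b ∈ NN, a ≠ b → G.Adj a b := by
      intro a ha b hb hab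
      simp only [hNNdef, Finset.mem_filter] at ha hb
      by_contra hadj
      apply h3 {v, a, b}
      rw [is3Clique_triple_iff]
      exact ⟨⟨Ne.symm ha.2.1, ha.2.2⟩, ⟨Ne.symm hb.2.1, hb.2.2⟩, ⟨hab, hadj⟩⟩
    by_cases hNN : l + 1 ≤ NN.card
    · obtain ⟨t, hts, htc⟩ := Finset.exists_subset_card_eq hNN
      refine ⟨t, ⟨?_, htc⟩⟩
      intro a ha b hb hab
      exact hNNcl a (hts ha) b (hts hb) hab
    · push_neg at hNN
      set Nv := Finset.univ.filter (fun u => G.Adj v u) with hNvdef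
      have hcardle : Fintype.card V ≤ 1 + (NN.card + Nv.card) := by
        have hsub : (Finset.univ : Finset V) ⊆ insert v (NN ∪ Nv) := by
          intro x _
          by_cases h1 : x = v
          · simp [h1]
          · by_cases h2 : G.Adj v x
            · simp [hNvdef, h2, Finset.mem_insert, Finset.mem_union]
            · simp [hNNdef, h1, h2, Finset.mem_insert, Finset.mem_union]
        calc Fintype.card V = (Finset.univ : Finset V).card := Finset.card_univ.symm
          _ ≤ (insert v (NN ∪ Nv)).card := Finset.card_le_card hsub
          _ ≤ (NN ∪ Nv).card + 1 := Finset.card_insert_le _ _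
          _ ≤ 1 + (NN.card + Nv.card) := by
              have := Finset.card_union_le NN Nv
              omega
      have hNv : l * l ≤ Nv.card := by
        have hsq : (l+1) * (l+1) = l*l + 2*l + 1 := by ring
        omega
      have hcard' : l * l ≤ Fintype.card {u : V // G.Adj v u} := by
        rw [Fintype.card_subtype]
        convert hNv using 2
      have h3' : ∀ s : Finset {u : V // G.Adj v u},
          ¬ ((G.comap (Subtype.val : {u : V // G.Adj v u} → V))ᶜ.IsNClique 3 s) := by
        intro s hs
        rw [compl_comap Subtype.val_injective] at hs
        exact h3 _ (isNClique_comap_map Subtype.val_injective hs)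
      obtain ⟨s', hs'⟩ := ih {u : V // G.Adj v u} (G.comap Subtype.val) h3' hcard'
      have hmap := isNClique_comap_map Subtype.val_injective hs'
      refine ⟨insert v (s'.map ⟨Subtype.val, Subtype.val_injective⟩), ?_⟩
      refine hmap.insert (fun b hb => ?_)
      obtain ⟨w, hw, rfl⟩ := Finset.mem_map.mp hb
      exact w.2

lemma square_mem_S (l : ℕ) : l * l ∈ S l := by
  intro n hn G
  by_cases h3 : ∃ s : Finset (Fin n), Gᶜ.IsNClique 3 s
  · exact Or.inl h3
  · push_neg at h3
    exact Or.inr (ramsey_key l (Fin n) G h3 (by simpa using hn))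

lemma S_nonempty (l : ℕ) : (S l).Nonempty := ⟨l*l, square_mem_S l⟩

lemma zero_not_mem_S {l : ℕ} (hl : 1 ≤ l) : 0 ∉ S l := by
  intro h
  rcases h (l-1) (Nat.zero_le _) ⊤ with ⟨s, hs⟩ | ⟨s, hs⟩
  · have h2 : 1 < s.card := by rw [hs.2]; norm_num
    obtain ⟨a, ha, b, hb, hab⟩ := Finset.one_lt_card.mp h2
    have := hs.1 ha hb hab
    rw [compl_adj] at this
    exact this.2 (by simp [hab])
  · have h1 := hs.2 ▸ Finset.card_le_univ s
    simp only [Finset.card_univ, Fintype.card_fin] at h1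
    omega

lemma sInf_S_pos {l : ℕ} (hl : 1 ≤ l) : 1 ≤ sInf (S l) := by
  rcases Nat.eq_zero_or_pos (sInf (S l)) with h | h
  · exact absurd (h ▸ Nat.sInf_mem (S_nonempty l)) (zero_not_mem_S hl)
  · exact h

lemma le_sInf_of_not_mem {l N : ℕ} (hN : N ∉ S l) : N + 1 ≤ sInf (S l) := by
  refine le_csInf (S_nonempty l) (fun m hm => ?_)
  by_contra hlt
  push_neg at hlt
  exact hN (S_upward (by omega) hm)

lemma extract (l : ℕ) (hl : 1 ≤ l) :
    ∃ G : SimpleGraph (Fin (sInf (S l) - 1)),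
      (∀ s, ¬ Gᶜ.IsNClique 3 s) ∧ (∀ s, ¬ G.IsNClique l s) := by
  have hpos : 1 ≤ sInf (S l) := sInf_S_pos hl
  have hnm : sInf (S l) - 1 ∉ S l := Nat.notMem_of_lt_sInf (by omega)
  simp only [S, Set.mem_setOf_eq] at hnm
  push_neg at hnm
  obtain ⟨n, hn, G, h3, hK⟩ := hnm
  refine ⟨G.comap (Fin.castLE hn), fun s hs => ?_, fun s hs => ?_⟩
  · erw [compl_comap (Fin.castLE_injective hn)] at hs
    exact h3 _ (isNClique_comap_map (Fin.castLE_injective hn) hs)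
  · exact hK _ (isNClique_comap_map (Fin.castLE_injective hn) hs)


def oneExt {α : Type} (G : SimpleGraph α) : SimpleGraph (α ⊕ Fin 1) where
  Adj x y := match x, y with
    | Sum.inl a, Sum.inl b => G.Adj a b
    | Sum.inl _, Sum.inr _ => True
    | Sum.inr _, Sum.inl _ => True
    | Sum.inr _, Sum.inr _ => False
  symm := ⟨by rintro (a|a) (b|b) h <;> first | exact h.symm | trivial | exact h⟩
  loopless := by
    constructor
    rintro (a|a) h
    · exact G.irrefl h
    · exact h

@[simp] lemma oneExt_adj_ll {α : Type} (G : SimpleGraph α) (a b : α) :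
    (oneExt G).Adj (Sum.inl a) (Sum.inl b) ↔ G.Adj a b := Iff.rfl
@[simp] lemma oneExt_adj_lr {α : Type} (G : SimpleGraph α) (a : α) (q : Fin 1) :
    (oneExt G).Adj (Sum.inl a) (Sum.inr q) ↔ True := Iff.rfl
@[simp] lemma oneExt_adj_rl {α : Type} (G : SimpleGraph α) (a : α) (q : Fin 1) :
    (oneExt G).Adj (Sum.inr q) (Sum.inl a) ↔ True := Iff.rfl
@[simp] lemma oneExt_adj_rr {α : Type} (G : SimpleGraph α) (q q' : Fin 1) :
    (oneExt G).Adj (Sum.inr q) (Sum.inr q') ↔ False := Iff.rfl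

lemma R3_strict (w : ℕ) (hw : 1 ≤ w) : sInf (S w) + 1 ≤ sInf (S (w+1)) := by
  classical
  obtain ⟨G, h3, hK⟩ := extract w hw
  have hpos : 1 ≤ sInf (S w) := sInf_S_pos hw
  have h3'' : ∀ s : Finset (Fin (sInf (S w) - 1) ⊕ Fin 1), ¬ (oneExt G)ᶜ.IsNClique 3 s := by
    intro s hs
    rw [is3Clique_iff] at hs
    obtain ⟨x, y, z, hxy, hxz, hyz, rfl⟩ := hs
    have hIU : ∀ (p : Fin (sInf (S w) - 1)) (q : Fin 1),
        ¬ (oneExt G)ᶜ.Adj (Sum.inl p) (Sum.inr q) := by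
      intro p q h
      exact h.2 trivial
    have hUU : ∀ (q q' : Fin 1), ¬ (oneExt G)ᶜ.Adj (Sum.inr q) (Sum.inr q') := by
      intro q q' h
      exact h.1 (by rw [Subsingleton.elim q q'])
    rcases x with a|a
    · rcases y with b|b
      · rcases z with c|c
        · refine h3 {a, b, c} ?_
          rw [is3Clique_triple_iff]
          exact ⟨⟨fun h => hxy.1 (congrArg _ h), fun h => hxy.2 h⟩,
                 ⟨fun h => hxz.1 (congrArg _ h), fun h => hxz.2 h⟩,
                 ⟨fun h => hyz.1 (congrArg _ h), fun h => hyz.2 h⟩⟩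
        · exact hIU _ _ hxz
      · exact hIU _ _ hxy
    · rcases y with b|b
      · exact hIU _ _ hxy.symm
      · exact hUU _ _ hxy
  have hK'' : ∀ s, ¬ (oneExt G).IsNClique (w+1) s := by
    intro s hs
    have hcards : s.toLeft.card + s.toRight.card = w + 1 := by
      rw [Finset.card_toLeft_add_card_toRight, hs.2]
    have hR1 : s.toRight.card ≤ 1 := by
      have := Finset.card_le_univ s.toRight
      simpa using this
    have hw' : w ≤ s.toLeft.card := by omega
    obtain ⟨t, hts, htc⟩ := Finset.exists_subset_card_eq hw'
    refine hK t ⟨?_, htc⟩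
    intro a ha b hb hab
    have h1 : Sum.inl a ∈ s := Finset.mem_toLeft.mp (hts ha)
    have h2 : Sum.inl b ∈ s := Finset.mem_toLeft.mp (hts hb)
    exact hs.1 h1 h2 (fun h => hab (Sum.inl_injective h))
  have hMnot : sInf (S w) ∉ S (w+1) :=
    not_mem_S (finSumFinEquiv.trans (finCongr (by omega))) (oneExt G) h3'' hK''
  exact le_sInf_of_not_mem hMnot

lemma exists_clique_small {w w2 : ℕ} (hw2 : 1 ≤ w2) (hle : w2 ≤ w)
    (G : SimpleGraph (Fin (sInf (S (w+1)) - 1)))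
    (h3 : ∀ s, ¬ Gᶜ.IsNClique 3 s) :
    ∃ s, G.IsNClique w2 s := by
  by_contra hK
  push_neg at hK
  have hN : sInf (S (w+1)) - 1 ∉ S w2 := by
    intro h
    rcases h _ le_rfl G with ⟨s, hs⟩ | ⟨s, hs⟩
    · exact h3 s hs
    · exact hK s hs
  have h1 : sInf (S (w+1)) - 1 + 1 ≤ sInf (S w2) := le_sInf_of_not_mem hN
  have h2 : sInf (S (w2+1)) ≤ sInf (S (w+1)) :=
    Nat.sInf_le (S_anti (by omega) (Nat.sInf_mem (S_nonempty (w+1))))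
  have h3' := R3_strict w2 hw2
  have hpos : 1 ≤ sInf (S (w+1)) := sInf_S_pos (by omega)
  omega


lemma clique_card_le {α : Type} {G : SimpleGraph α} {w : ℕ}
    (h : ∀ s, ¬ G.IsNClique (w+1) s)
    (t : Finset α) (ht : ∀ a ∈ t, ∀ b ∈ t, a ≠ b → G.Adj a b) : t.card ≤ w := by
  by_contra hc
  push_neg at hc
  obtain ⟨t', ht', htc⟩ := Finset.exists_subset_card_eq (show w+1 ≤ t.card by omega)
  exact h t' ⟨fun a ha b hb hab => ht a (ht' ha) b (ht' hb) hab, htc⟩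

section Construction

variable {N1 N2 w2 : ℕ} (G1 : SimpleGraph (Fin N1)) (G2 : SimpleGraph (Fin N2))
variable (v : Fin w2 → Fin N1) (u : Fin w2 → Fin N2)

def bigAdj : (Fin N1 ⊕ (Fin N2 ⊕ Fin w2)) → (Fin N1 ⊕ (Fin N2 ⊕ Fin w2)) → Prop
  | Sum.inl a, Sum.inl b => G1ᶜ.Adj a b
  | Sum.inl a, Sum.inr (Sum.inl b) => ∃ i, a = v i ∧ G2ᶜ.Adj (u i) b
  | Sum.inl a, Sum.inr (Sum.inr i) => G1ᶜ.Adj (v i) a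
  | Sum.inr (Sum.inl b), Sum.inl a => ∃ i, a = v i ∧ G2ᶜ.Adj (u i) b
  | Sum.inr (Sum.inl a), Sum.inr (Sum.inl b) => G2ᶜ.Adj a b
  | Sum.inr (Sum.inl b), Sum.inr (Sum.inr i) => b = u i
  | Sum.inr (Sum.inr i), Sum.inl a => G1ᶜ.Adj (v i) a
  | Sum.inr (Sum.inr i), Sum.inr (Sum.inl b) => b = u i
  | Sum.inr (Sum.inr _), Sum.inr (Sum.inr _) => False

def bigGraph : SimpleGraph (Fin N1 ⊕ (Fin N2 ⊕ Fin w2)) where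
  Adj := bigAdj G1 G2 v u
  symm := by
    constructor
    rintro (a|b|i) (a'|b'|i') h <;> first | exact h | exact h.symm
  loopless := by
    constructor
    rintro (a|b|i) h
    · exact (G1ᶜ).irrefl h
    · exact (G2ᶜ).irrefl h
    · exact h

@[simp] lemma bigAdj_11 (a b : Fin N1) :
    (bigGraph G1 G2 v u).Adj (Sum.inl a) (Sum.inl b) ↔ G1ᶜ.Adj a b := Iff.rfl
@[simp] lemma bigAdj_12 (a : Fin N1) (b : Fin N2) :
    (bigGraph G1 G2 v u).Adj (Sum.inl a) (Sum.inr (Sum.inl b)) ↔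
      ∃ i, a = v i ∧ G2ᶜ.Adj (u i) b := Iff.rfl
@[simp] lemma bigAdj_13 (a : Fin N1) (i : Fin w2) :
    (bigGraph G1 G2 v u).Adj (Sum.inl a) (Sum.inr (Sum.inr i)) ↔ G1ᶜ.Adj (v i) a := Iff.rfl
@[simp] lemma bigAdj_21 (a : Fin N1) (b : Fin N2) :
    (bigGraph G1 G2 v u).Adj (Sum.inr (Sum.inl b)) (Sum.inl a) ↔
      ∃ i, a = v i ∧ G2ᶜ.Adj (u i) b := Iff.rfl
@[simp] lemma bigAdj_22 (a b : Fin N2) :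
    (bigGraph G1 G2 v u).Adj (Sum.inr (Sum.inl a)) (Sum.inr (Sum.inl b)) ↔ G2ᶜ.Adj a b := Iff.rfl
@[simp] lemma bigAdj_23 (b : Fin N2) (i : Fin w2) :
    (bigGraph G1 G2 v u).Adj (Sum.inr (Sum.inl b)) (Sum.inr (Sum.inr i)) ↔ b = u i := Iff.rfl
@[simp] lemma bigAdj_31 (a : Fin N1) (i : Fin w2) :
    (bigGraph G1 G2 v u).Adj (Sum.inr (Sum.inr i)) (Sum.inl a) ↔ G1ᶜ.Adj (v i) a := Iff.rfl
@[simp] lemma bigAdj_32 (b : Fin N2) (i : Fin w2) :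
    (bigGraph G1 G2 v u).Adj (Sum.inr (Sum.inr i)) (Sum.inr (Sum.inl b)) ↔ b = u i := Iff.rfl
@[simp] lemma bigAdj_33 (i j : Fin w2) :
    (bigGraph G1 G2 v u).Adj (Sum.inr (Sum.inr i)) (Sum.inr (Sum.inr j)) ↔ False := Iff.rfl

end Construction


section Construction2

variable {N1 N2 w2 : ℕ} {G1 : SimpleGraph (Fin N1)} {G2 : SimpleGraph (Fin N2)}
variable {v : Fin w2 → Fin N1} {u : Fin w2 → Fin N2}

lemma bigGraph_trianglefree
    (hv_inj : Function.Injective v)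
    (hv_adj : ∀ i j, i ≠ j → G1.Adj (v i) (v j))
    (hu_adj : ∀ i j, i ≠ j → G2.Adj (u i) (u j))
    (h13 : ∀ s : Finset (Fin N1), ¬ G1ᶜ.IsNClique 3 s)
    (h23 : ∀ s : Finset (Fin N2), ¬ G2ᶜ.IsNClique 3 s) :
    ∀ s, ¬ (bigGraph G1 G2 v u).IsNClique 3 s := by
  classical
  rintro s hs
  rw [is3Clique_iff] at hs
  obtain ⟨x, y, z, hxy, hxz, hyz, rfl⟩ := hs
  rcases x with a|b|i <;> rcases y with a'|b'|i' <;> rcases z with a''|b''|i'' <;>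
    simp only [bigAdj_11, bigAdj_12, bigAdj_13, bigAdj_21, bigAdj_22, bigAdj_23,
      bigAdj_31, bigAdj_32, bigAdj_33] at hxy hxz hyz
  -- (1,1,1)
  · exact h13 {a, a', a''} (is3Clique_triple_iff.mpr ⟨hxy, hxz, hyz⟩)
  -- (1,1,2)
  · obtain ⟨i, rfl, hib⟩ := hxz
    obtain ⟨j, rfl, hjb⟩ := hyz
    rcases eq_or_ne i j with rfl | hij
    · exact (G1ᶜ).irrefl hxy
    · exact ((compl_adj _ _ _).mp hxy).2 (hv_adj i j hij)
  -- (1,1,3)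
  · exact h13 {v i'', a, a'} (is3Clique_triple_iff.mpr ⟨hxz, hyz, hxy⟩)
  -- (1,2,1)
  · obtain ⟨i, rfl, hib⟩ := hxy
    obtain ⟨j, rfl, hjb⟩ := hyz
    rcases eq_or_ne i j with rfl | hij
    · exact (G1ᶜ).irrefl hxz
    · exact ((compl_adj _ _ _).mp hxz).2 (hv_adj i j hij)
  -- (1,2,2)
  · obtain ⟨i, rfl, hib⟩ := hxy
    obtain ⟨j, hvj, hjb⟩ := hxz
    obtain rfl := hv_inj hvj
    exact h23 {u i, b', b''} (is3Clique_triple_iff.mpr ⟨hib, hjb, hyz⟩)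
  -- (1,2,3)
  · obtain ⟨j, rfl, hjb⟩ := hxy
    subst hyz
    rcases eq_or_ne j i'' with rfl | hji
    · exact (G2ᶜ).irrefl hjb
    · exact ((compl_adj _ _ _).mp hjb).2 (hu_adj j i'' hji)
  -- (1,3,1)
  · exact h13 {v i', a, a''} (is3Clique_triple_iff.mpr ⟨hxy, hyz, hxz⟩)
  -- (1,3,2)
  · obtain ⟨j, rfl, hjb⟩ := hxz
    subst hyz
    rcases eq_or_ne j i' with rfl | hji
    · exact (G2ᶜ).irrefl hjb
    · exact ((compl_adj _ _ _).mp hjb).2 (hu_adj j i' hji)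
  -- (2,1,1)
  · obtain ⟨i, rfl, hib⟩ := hxy
    obtain ⟨j, rfl, hjb⟩ := hxz
    rcases eq_or_ne i j with rfl | hij
    · exact (G1ᶜ).irrefl hyz
    · exact ((compl_adj _ _ _).mp hyz).2 (hv_adj i j hij)
  -- (2,1,2)
  · obtain ⟨i, rfl, hib⟩ := hxy
    obtain ⟨j, hvj, hjb⟩ := hyz
    obtain rfl := hv_inj hvj
    exact h23 {u i, b, b''} (is3Clique_triple_iff.mpr ⟨hib, hjb, hxz⟩)
  -- (2,1,3)
  · obtain ⟨j, rfl, hjb⟩ := hxy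
    subst hxz
    rcases eq_or_ne j i'' with rfl | hji
    · exact (G2ᶜ).irrefl hjb
    · exact ((compl_adj _ _ _).mp hjb).2 (hu_adj j i'' hji)
  -- (2,2,1)
  · obtain ⟨i, rfl, hib⟩ := hxz
    obtain ⟨j, hvj, hjb⟩ := hyz
    obtain rfl := hv_inj hvj
    exact h23 {u i, b, b'} (is3Clique_triple_iff.mpr ⟨hib, hjb, hxy⟩)
  -- (2,2,2)
  · exact h23 {b, b', b''} (is3Clique_triple_iff.mpr ⟨hxy, hxz, hyz⟩)
  -- (2,2,3)
  · subst hxz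
    subst hyz
    exact (G2ᶜ).irrefl hxy
  -- (2,3,1)
  · obtain ⟨j, rfl, hjb⟩ := hxz
    subst hxy
    rcases eq_or_ne j i' with rfl | hji
    · exact (G2ᶜ).irrefl hjb
    · exact ((compl_adj _ _ _).mp hjb).2 (hu_adj j i' hji)
  -- (2,3,2)
  · subst hxy
    subst hyz
    exact (G2ᶜ).irrefl hxz
  -- (3,1,1)
  · exact h13 {v i, a', a''} (is3Clique_triple_iff.mpr ⟨hxy, hxz, hyz⟩)
  -- (3,1,2)
  · obtain ⟨j, rfl, hjb⟩ := hyz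
    subst hxz
    rcases eq_or_ne j i with rfl | hji
    · exact (G2ᶜ).irrefl hjb
    · exact ((compl_adj _ _ _).mp hjb).2 (hu_adj j i hji)
  -- (3,2,1)
  · obtain ⟨j, rfl, hjb⟩ := hyz
    subst hxy
    rcases eq_or_ne j i with rfl | hji
    · exact (G2ᶜ).irrefl hjb
    · exact ((compl_adj _ _ _).mp hjb).2 (hu_adj j i hji)
  -- (3,2,2)
  · subst hxy
    subst hxz
    exact (G2ᶜ).irrefl hyz
end Construction2


section Construction3

variable {N1 N2 w2 : ℕ} {G1 : SimpleGraph (Fin N1)} {G2 : SimpleGraph (Fin N2)}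
variable {v : Fin w2 → Fin N1} {u : Fin w2 → Fin N2}

lemma bigGraph_indep_bound {w1 : ℕ}
    (hv_inj : Function.Injective v) (hu_inj : Function.Injective u)
    (hv_adj : ∀ i j, i ≠ j → G1.Adj (v i) (v j))
    (hu_adj : ∀ i j, i ≠ j → G2.Adj (u i) (u j))
    (h1K : ∀ s, ¬ G1.IsNClique (w1+1) s)
    (h2K : ∀ s, ¬ G2.IsNClique (w2+1) s) :
    ∀ s, ¬ (bigGraph G1 G2 v u)ᶜ.IsNClique (w1+w2+1) s := by
  classical
  intro s hs
  have hind : ∀ x ∈ s, ∀ y ∈ s, x ≠ y → ¬ (bigGraph G1 G2 v u).Adj x y := by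
    intro x hx y hy hxy
    exact ((compl_adj _ _ _).mp (hs.1 hx hy hxy)).2
  have hmemL : ∀ a, a ∈ s.toLeft ↔ Sum.inl a ∈ s := fun a => Finset.mem_toLeft
  have hmem2 : ∀ b, b ∈ s.toRight.toLeft ↔ Sum.inr (Sum.inl b) ∈ s := by
    intro b
    rw [Finset.mem_toLeft, Finset.mem_toRight]
  have hmemX : ∀ i, i ∈ s.toRight.toRight ↔ Sum.inr (Sum.inr i) ∈ s := by
    intro i
    rw [Finset.mem_toRight, Finset.mem_toRight]
  have hc1 := Finset.card_toLeft_add_card_toRight (u := s)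
  have hc2 := Finset.card_toLeft_add_card_toRight (u := s.toRight)
  have hcards := hs.2
  set O := s.toRight.toRight.filter (fun i => v i ∈ s.toLeft) with hOdef
  have hA : s.toLeft.card + s.toRight.toRight.card ≤ w1 + O.card := by
    have ht1 : (s.toLeft ∪ s.toRight.toRight.image v).card ≤ w1 := by
      apply clique_card_le h1K
      intro a ha b hb hab
      rcases Finset.mem_union.mp ha with ha' | ha' <;>
        rcases Finset.mem_union.mp hb with hb' | hb'
      · refine adj_of_not_compl hab (fun hc => ?_)
        exact hind _ ((hmemL a).mp ha') _ ((hmemL b).mp hb')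
          (fun h => hab (Sum.inl_injective h)) hc
      · obtain ⟨i, hi, rfl⟩ := Finset.mem_image.mp hb'
        have hni : ¬ (bigGraph G1 G2 v u).Adj (Sum.inl a) (Sum.inr (Sum.inr i)) :=
          hind _ ((hmemL a).mp ha') _ ((hmemX i).mp hi) (by simp)
        exact (adj_of_not_compl (Ne.symm hab) (fun hc => hni hc)).symm
      · obtain ⟨i, hi, rfl⟩ := Finset.mem_image.mp ha'
        have hni : ¬ (bigGraph G1 G2 v u).Adj (Sum.inl b) (Sum.inr (Sum.inr i)) :=
          hind _ ((hmemL b).mp hb') _ ((hmemX i).mp hi) (by simp)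
        exact adj_of_not_compl hab (fun hc => hni hc)
      · obtain ⟨i, hi, rfl⟩ := Finset.mem_image.mp ha'
        obtain ⟨j, hj, rfl⟩ := Finset.mem_image.mp hb'
        exact hv_adj i j (fun h => hab (congrArg v h))
    have himg : (s.toRight.toRight.image v).card = s.toRight.toRight.card :=
      Finset.card_image_of_injective _ hv_inj
    have hI : (s.toLeft ∩ s.toRight.toRight.image v).card = O.card := by
      have hOimg : s.toLeft ∩ s.toRight.toRight.image v = O.image v := by
        ext x
        simp only [Finset.mem_inter, Finset.mem_image, hOdef, Finset.mem_filter]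
        constructor
        · rintro ⟨hxL, ⟨i, hi, rfl⟩⟩
          exact ⟨i, ⟨hi, hxL⟩, rfl⟩
        · rintro ⟨i, ⟨hi, hvL⟩, rfl⟩
          exact ⟨hvL, ⟨i, hi, rfl⟩⟩
      rw [hOimg, Finset.card_image_of_injective _ hv_inj]
    have hcu := Finset.card_union_add_card_inter s.toLeft (s.toRight.toRight.image v)
    omega
  have hB : s.toRight.toLeft.card + O.card ≤ w2 := by
    have ht2 : (s.toRight.toLeft ∪ O.image u).card ≤ w2 := by
      apply clique_card_le h2K
      intro a ha b hb hab
      rcases Finset.mem_union.mp ha with ha' | ha' <;>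
        rcases Finset.mem_union.mp hb with hb' | hb'
      · refine adj_of_not_compl hab (fun hc => ?_)
        exact hind _ ((hmem2 a).mp ha') _ ((hmem2 b).mp hb')
          (by simpa using hab) hc
      · obtain ⟨i, hi, rfl⟩ := Finset.mem_image.mp hb'
        have hiO := Finset.mem_filter.mp hi
        have hni : ¬ (bigGraph G1 G2 v u).Adj (Sum.inl (v i)) (Sum.inr (Sum.inl a)) :=
          hind _ ((hmemL _).mp hiO.2) _ ((hmem2 a).mp ha') (by simp)
        have hnc : ¬ G2ᶜ.Adj (u i) a := fun hc => hni ⟨i, rfl, hc⟩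
        exact (adj_of_not_compl (Ne.symm hab) hnc).symm
      · obtain ⟨i, hi, rfl⟩ := Finset.mem_image.mp ha'
        have hiO := Finset.mem_filter.mp hi
        have hni : ¬ (bigGraph G1 G2 v u).Adj (Sum.inl (v i)) (Sum.inr (Sum.inl b)) :=
          hind _ ((hmemL _).mp hiO.2) _ ((hmem2 b).mp hb') (by simp)
        exact adj_of_not_compl hab (fun hc => hni ⟨i, rfl, hc⟩)
      · obtain ⟨i, hi, rfl⟩ := Finset.mem_image.mp ha'
        obtain ⟨j, hj, rfl⟩ := Finset.mem_image.mp hb'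
        exact hu_adj i j (fun h => hab (congrArg u h))
    have hdisj : Disjoint s.toRight.toLeft (O.image u) := by
      rw [Finset.disjoint_right]
      intro a haimg ha2
      obtain ⟨i, hi, rfl⟩ := Finset.mem_image.mp haimg
      have hiO := Finset.mem_filter.mp hi
      exact hind _ ((hmem2 _).mp ha2) _ ((hmemX i).mp hiO.1) (by simp) rfl
    have hcard2 : (s.toRight.toLeft ∪ O.image u).card
        = s.toRight.toLeft.card + O.card := by
      rw [Finset.card_union_of_disjoint hdisj, Finset.card_image_of_injective _ hu_inj]
    omega
  omega

end Construction3


lemma exists_enum {α : Type} [LinearOrder α] {G : SimpleGraph α} {k : ℕ} {t : Finset α}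
    (ht : G.IsNClique k t) :
    ∃ f : Fin k → α, Function.Injective f ∧ ∀ i j, i ≠ j → G.Adj (f i) (f j) := by
  refine ⟨fun i => (t.orderIsoOfFin ht.2 i : α), ?_, ?_⟩
  · intro i j h
    exact (t.orderIsoOfFin ht.2).injective (Subtype.ext h)
  · intro i j hij
    refine ht.1 (t.orderIsoOfFin ht.2 i).2 (t.orderIsoOfFin ht.2 j).2 ?_
    intro h
    exact hij ((t.orderIsoOfFin ht.2).injective (Subtype.ext h))

end XXR

open XXR
theorem stmt9 : ∀ w1 w2 : ℕ, 1 ≤ w2 → w2 ≤ w1 →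
    (R3 (w1 + 1) - 1) + (R3 (w2 + 1) - 1) + w2 ≤ R3 (w1 + w2 + 1) - 1 := by
  intro w1 w2 hw2 hw12
  obtain ⟨G1, h13, h1K⟩ := extract (w1+1) (by omega)
  obtain ⟨G2, h23, h2K⟩ := extract (w2+1) (by omega)
  obtain ⟨Mv, hMv⟩ := exists_clique_small hw2 (by omega) G1 h13
  obtain ⟨Tu, hTu⟩ := exists_clique_small hw2 le_rfl G2 h23
  obtain ⟨v, hv_inj, hv_adj⟩ := exists_enum hMv
  obtain ⟨u, hu_inj, hu_adj⟩ := exists_enum hTu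
  have htri := bigGraph_trianglefree hv_inj hv_adj hu_adj h13 h23
  have hbound := bigGraph_indep_bound (w1 := w1) hv_inj hu_inj hv_adj hu_adj h1K h2K
  have hnot : (sInf (S (w1+1)) - 1) + ((sInf (S (w2+1)) - 1) + w2) ∉ S (w1+w2+1) := by
    refine not_mem_S ((Equiv.sumCongr (Equiv.refl _) finSumFinEquiv).trans finSumFinEquiv)
      (bigGraph G1 G2 v u)ᶜ ?_ hbound
    intro s hsx
    rw [compl_compl] at hsx
    exact htri s hsx
  have hfin := le_sInf_of_not_mem hnot
  have hp1 : 1 ≤ sInf (S (w1+1)) := sInf_S_pos (by omega)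
  have hp2 : 1 ≤ sInf (S (w2+1)) := sInf_S_pos (by omega)
  rw [R3_eq, R3_eq, R3_eq]
  omega
end

section
/- Given vertex-disjoint graphs G₁, G₂ with α(G_i) ≤ 2, ω(G_i) = ω_i, ω₁ ≥ ω₂ ≥ 1, and each G_i containing a clique of size ω₂ (namely ω(G₂) = ω₂ ≤ ω₁ = ω(G₁)), there exists a graph H on |V(G₁)| + |V(G₂)| + ω₂ vertices with α(H) ≤ 2 and ω(H) = ω₁ + ω₂. -/
open SimpleGraph

/-! ### Auxiliary constructions -/

/-- The adjacency relation of the glued (complement-world) graph. -/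
def FAdj {n1 n2 w2 : ℕ} (G1 : SimpleGraph (Fin n1)) (G2 : SimpleGraph (Fin n2))
    (v : Fin w2 → Fin n1) (u : Fin w2 → Fin n2) :
    ((Fin n1 ⊕ Fin n2) ⊕ Fin w2) → ((Fin n1 ⊕ Fin n2) ⊕ Fin w2) → Prop
  | .inl (.inl a), .inl (.inl b) => G1ᶜ.Adj a b
  | .inl (.inr a), .inl (.inr b) => G2ᶜ.Adj a b
  | .inl (.inl a), .inl (.inr b) => (∃ i, v i = a) ∧ (∃ j, u j = b)
  | .inl (.inr b), .inl (.inl a) => (∃ i, v i = a) ∧ (∃ j, u j = b)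
  | .inr i, .inl (.inl a) => G1ᶜ.Adj (v i) a
  | .inl (.inl a), .inr i => G1ᶜ.Adj (v i) a
  | .inr i, .inl (.inr b) => G2ᶜ.Adj (u i) b
  | .inl (.inr b), .inr i => G2ᶜ.Adj (u i) b
  | .inr _, .inr _ => False

/-- The glued graph. -/
def FG {n1 n2 w2 : ℕ} (G1 : SimpleGraph (Fin n1)) (G2 : SimpleGraph (Fin n2))
    (v : Fin w2 → Fin n1) (u : Fin w2 → Fin n2) :
    SimpleGraph ((Fin n1 ⊕ Fin n2) ⊕ Fin w2) where
  Adj x y := FAdj G1 G2 v u x y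
  symm := by
    refine ⟨?_⟩
    rintro ((a|a)|a) ((b|b)|b) h <;>
      first
        | exact h.symm
        | exact h
  loopless := by
    refine ⟨?_⟩
    rintro ((a|a)|a) h
    · exact G1ᶜ.loopless.irrefl a h
    · exact G2ᶜ.loopless.irrefl a h
    · exact h

def emb1 (n1 n2 w2 : ℕ) : Fin n1 ↪ (Fin n1 ⊕ Fin n2) ⊕ Fin w2 :=
  ⟨fun a => .inl (.inl a), fun a b h => by simpa using h⟩

def emb2 (n1 n2 w2 : ℕ) : Fin n2 ↪ (Fin n1 ⊕ Fin n2) ⊕ Fin w2 :=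
  ⟨fun a => .inl (.inr a), fun a b h => by simpa using h⟩

def emb3 (n1 n2 w2 : ℕ) : Fin w2 ↪ (Fin n1 ⊕ Fin n2) ⊕ Fin w2 :=
  ⟨fun a => .inr a, fun a b h => by simpa using h⟩

@[simp] lemma emb1_apply (n1 n2 w2 : ℕ) (a : Fin n1) :
    emb1 n1 n2 w2 a = Sum.inl (Sum.inl a) := rfl

@[simp] lemma emb2_apply (n1 n2 w2 : ℕ) (a : Fin n2) :
    emb2 n1 n2 w2 a = Sum.inl (Sum.inr a) := rfl

@[simp] lemma emb3_apply (n1 n2 w2 : ℕ) (a : Fin w2) :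
    emb3 n1 n2 w2 a = Sum.inr a := rfl

lemma cliqueNum_comap {V W : Type} [Fintype V] [Fintype W]
    (G : SimpleGraph W) (e : V ≃ W) : (G.comap e).cliqueNum = G.cliqueNum := by
  unfold SimpleGraph.cliqueNum
  congr 1
  ext n
  constructor
  · rintro ⟨s, hs, hc⟩
    refine ⟨s.map e.toEmbedding, ?_, by simpa using hc⟩
    intro a ha b hb hab
    simp only [Finset.coe_map, Set.mem_image, Finset.mem_coe] at ha hb
    obtain ⟨x, hx, rfl⟩ := ha
    obtain ⟨y, hy, rfl⟩ := hb
    exact hs hx hy (fun hh => hab (by rw [hh]))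
  · rintro ⟨s, hs, hc⟩
    refine ⟨s.map e.symm.toEmbedding, ?_, by simpa using hc⟩
    intro a ha b hb hab
    simp only [Finset.coe_map, Set.mem_image, Finset.mem_coe] at ha hb
    obtain ⟨x, hx, rfl⟩ := ha
    obtain ⟨y, hy, rfl⟩ := hb
    have : G.Adj x y := hs hx hy (fun hh => hab (by rw [hh]))
    simpa [SimpleGraph.comap] using this

theorem stmt10 : ∀ (n1 n2 w1 w2 : ℕ) (G1 : SimpleGraph (Fin n1)) (G2 : SimpleGraph (Fin n2)),
    _root_.indepNum G1 ≤ 2 → _root_.indepNum G2 ≤ 2 → G1.cliqueNum = w1 → G2.cliqueNum = w2 →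
    1 ≤ w2 → w2 ≤ w1 →
    ∃ H : SimpleGraph (Fin (n1 + n2 + w2)), _root_.indepNum H ≤ 2 ∧ H.cliqueNum = w1 + w2 := by
  classical
  intro n1 n2 w1 w2 G1 G2 h1 h2 hw1 hw2 _hw2pos hle
  unfold _root_.indepNum at h1 h2 ⊢
  -- maximum cliques of G1 and G2
  obtain ⟨J1, hJ1⟩ := G1.exists_isNClique_cliqueNum
  obtain ⟨J2, hJ2⟩ := G2.exists_isNClique_cliqueNum
  rw [hw1] at hJ1
  rw [hw2] at hJ2
  have hJ1card : J1.card = w1 := hJ1.2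
  have hJ2card : J2.card = w2 := hJ2.2
  -- enumerate a w2-subset of J1 and all of J2
  obtain ⟨v, vinj, vmem⟩ : ∃ v : Fin w2 → Fin n1, Function.Injective v ∧ ∀ i, v i ∈ J1 := by
    refine ⟨fun i => (J1.orderIsoOfFin hJ1card (Fin.castLE hle i) : Fin n1), ?_, fun i =>
      (J1.orderIsoOfFin hJ1card (Fin.castLE hle i)).2⟩
    intro i j h
    have h2' : J1.orderIsoOfFin hJ1card (Fin.castLE hle i)
        = J1.orderIsoOfFin hJ1card (Fin.castLE hle j) := Subtype.ext h
    have := (J1.orderIsoOfFin hJ1card).injective h2'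
    exact Fin.castLE_injective hle this
  obtain ⟨u, uinj, umem, usur⟩ : ∃ u : Fin w2 → Fin n2, Function.Injective u ∧
      (∀ i, u i ∈ J2) ∧ ∀ b ∈ J2, ∃ i, u i = b := by
    refine ⟨fun i => (J2.orderIsoOfFin hJ2card i : Fin n2), ?_, fun i =>
      (J2.orderIsoOfFin hJ2card i).2, ?_⟩
    · intro i j h
      exact (J2.orderIsoOfFin hJ2card).injective (Subtype.ext h)
    · intro b hb
      obtain ⟨i, hi⟩ := (J2.orderIsoOfFin hJ2card).surjective ⟨b, hb⟩
      exact ⟨i, congrArg Subtype.val hi⟩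
  set F := FG G1 G2 v u with hF
  -- basic facts
  have toAdj1 : ∀ {x y : Fin n1}, ¬G1ᶜ.Adj x y → x ≠ y → G1.Adj x y := by
    intro x y h hne
    by_contra hA
    exact h ((G1.compl_adj x y).mpr ⟨hne, hA⟩)
  have toAdj2 : ∀ {x y : Fin n2}, ¬G2ᶜ.Adj x y → x ≠ y → G2.Adj x y := by
    intro x y h hne
    by_contra hA
    exact h ((G2.compl_adj x y).mpr ⟨hne, hA⟩)
  have noTri1 : ∀ {x y z : Fin n1}, G1ᶜ.Adj x y → G1ᶜ.Adj x z → G1ᶜ.Adj y z → False := by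
    intro x y z hxy hxz hyz
    have hcl : G1ᶜ.IsClique ({x, y, z} : Finset (Fin n1)) := by
      simp only [Finset.coe_insert, Finset.coe_singleton]
      intro a ha b hb hab
      rcases ha with rfl | rfl | rfl <;> rcases hb with rfl | rfl | rfl <;>
        first
          | exact absurd rfl hab
          | assumption
          | exact hxy.symm
          | exact hxz.symm
          | exact hyz.symm
    have hc3 : ({x, y, z} : Finset (Fin n1)).card = 3 := by
      rw [Finset.card_insert_of_notMem (by simp [hxy.ne, hxz.ne]),
        Finset.card_insert_of_notMem (by simp [hyz.ne]), Finset.card_singleton]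
    have := hcl.card_le_cliqueNum
    rw [hc3] at this
    omega
  have noTri2 : ∀ {x y z : Fin n2}, G2ᶜ.Adj x y → G2ᶜ.Adj x z → G2ᶜ.Adj y z → False := by
    intro x y z hxy hxz hyz
    have hcl : G2ᶜ.IsClique ({x, y, z} : Finset (Fin n2)) := by
      simp only [Finset.coe_insert, Finset.coe_singleton]
      intro a ha b hb hab
      rcases ha with rfl | rfl | rfl <;> rcases hb with rfl | rfl | rfl <;>
        first
          | exact absurd rfl hab
          | assumption
          | exact hxy.symm
          | exact hxz.symm
          | exact hyz.symm
    have hc3 : ({x, y, z} : Finset (Fin n2)).card = 3 := by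
      rw [Finset.card_insert_of_notMem (by simp [hxy.ne, hxz.ne]),
        Finset.card_insert_of_notMem (by simp [hyz.ne]), Finset.card_singleton]
    have := hcl.card_le_cliqueNum
    rw [hc3] at this
    omega
  have hI1 : ∀ {a b : Fin n1}, (∃ i, v i = a) → (∃ i, v i = b) → G1ᶜ.Adj a b → False := by
    rintro a b ⟨i, rfl⟩ ⟨j, rfl⟩ hadj
    rcases eq_or_ne i j with rfl | hij
    · exact G1ᶜ.loopless.irrefl _ hadj
    · exact ((G1.compl_adj _ _).mp hadj).2 (hJ1.1 (vmem i) (vmem j) (fun h => hij (vinj h)))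
  have hI2 : ∀ {a b : Fin n2}, (∃ i, u i = a) → (∃ i, u i = b) → G2ᶜ.Adj a b → False := by
    rintro a b ⟨i, rfl⟩ ⟨j, rfl⟩ hadj
    rcases eq_or_ne i j with rfl | hij
    · exact G2ᶜ.loopless.irrefl _ hadj
    · exact ((G2.compl_adj _ _).mp hadj).2 (hJ2.1 (umem i) (umem j) (fun h => hij (uinj h)))
  -- Claim A : F has no triangles, so F.cliqueNum ≤ 2
  have claimA : F.cliqueNum ≤ 2 := by
    have hnonempty : Set.Nonempty {n | ∃ t, F.IsNClique n t} :=
      ⟨0, ⟨∅, isNClique_empty.mpr rfl⟩⟩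
    apply csSup_le hnonempty
    rintro n ⟨s, hs⟩
    by_contra hn
    push_neg at hn
    have h3 : 2 < s.card := by rw [hs.2]; exact hn
    obtain ⟨x, hx, y, hy, z, hz, hxy, hxz, hyz⟩ := Finset.two_lt_card.mp h3
    have axy : F.Adj x y := hs.1 hx hy hxy
    have axz : F.Adj x z := hs.1 hx hz hxz
    have ayz : F.Adj y z := hs.1 hy hz hyz
    rcases x with ((xa|xa)|xa) <;> rcases y with ((ya|ya)|ya) <;> rcases z with ((za|za)|za) <;>
      simp only [hF, FG, FAdj] at axy axz ayz <;>
      first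
        | exact axy
        | exact axz
        | exact ayz
        | exact noTri1 axy axz ayz
        | exact noTri1 axz ayz axy
        | exact noTri1 axy ayz axz
        | exact noTri2 axy axz ayz
        | exact noTri2 axz ayz axy
        | exact noTri2 axy ayz axz
        | exact hI1 axz.1 ayz.1 axy
        | exact hI1 axy.1 ayz.1 axz
        | exact hI1 axy.1 axz.1 ayz
        | exact hI2 axz.2 ayz.2 axy
        | exact hI2 axy.2 ayz.2 axz
        | exact hI2 axy.2 axz.2 ayz
        | exact hI1 (⟨za, rfl⟩ : ∃ i, v i = v za) axy.1 axz
        | exact hI1 (⟨za, rfl⟩ : ∃ i, v i = v za) axy.1 ayz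
        | exact hI1 (⟨ya, rfl⟩ : ∃ i, v i = v ya) axz.1 axy
        | exact hI1 (⟨ya, rfl⟩ : ∃ i, v i = v ya) axz.1 ayz
        | exact hI1 (⟨xa, rfl⟩ : ∃ i, v i = v xa) ayz.1 axy
        | exact hI1 (⟨xa, rfl⟩ : ∃ i, v i = v xa) ayz.1 axz
  -- Claim B : Fᶜ.cliqueNum ≥ w1 + w2
  have claimB : w1 + w2 ≤ Fᶜ.cliqueNum := by
    set I1 : Finset (Fin n1) := Finset.image v Finset.univ with hI1def
    have hvI1 : ∀ i, v i ∈ I1 := by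
      intro i
      rw [hI1def]
      exact Finset.mem_image.mpr ⟨i, Finset.mem_univ i, rfl⟩
    set S0 : Finset ((Fin n1 ⊕ Fin n2) ⊕ Fin w2) :=
      ((J1 \ I1).map (emb1 n1 n2 w2)) ∪ (J2.map (emb2 n1 n2 w2)) ∪
        (Finset.univ.map (emb3 n1 n2 w2)) with hS0
    have memcases : ∀ {x}, x ∈ S0 →
        (∃ a, a ∈ J1 ∧ a ∉ I1 ∧ x = Sum.inl (Sum.inl a)) ∨
        (∃ b, b ∈ J2 ∧ x = Sum.inl (Sum.inr b)) ∨ (∃ i, x = Sum.inr i) := by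
      intro x hx
      rcases Finset.mem_union.mp hx with h' | h'
      · rcases Finset.mem_union.mp h' with h'' | h''
        · obtain ⟨a, ha, rfl⟩ := Finset.mem_map.mp h''
          exact Or.inl ⟨a, (Finset.mem_sdiff.mp ha).1, (Finset.mem_sdiff.mp ha).2, rfl⟩
        · obtain ⟨b, hb, rfl⟩ := Finset.mem_map.mp h''
          exact Or.inr (Or.inl ⟨b, hb, rfl⟩)
      · obtain ⟨i, _, rfl⟩ := Finset.mem_map.mp h'
        exact Or.inr (Or.inr ⟨i, rfl⟩)
    have hclique : Fᶜ.IsClique S0 := by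
      intro x hx y hy hxy
      rw [SimpleGraph.compl_adj]
      refine ⟨hxy, ?_⟩
      rcases memcases hx with ⟨a, haJ, haI, rfl⟩ | ⟨a, ha, rfl⟩ | ⟨a, rfl⟩ <;>
        rcases memcases hy with ⟨b, hbJ, hbI, rfl⟩ | ⟨b, hb, rfl⟩ | ⟨b, rfl⟩ <;>
          intro hadj <;> simp only [hF, FG, FAdj] at hadj
      · have hne : a ≠ b := fun h => hxy (by rw [h])
        exact ((G1.compl_adj _ _).mp hadj).2 (hJ1.1 haJ hbJ hne)
      · obtain ⟨⟨i, rfl⟩, -⟩ := hadj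
        exact haI (hvI1 i)
      · have hne : v b ≠ a := fun h => haI (h ▸ hvI1 b)
        exact ((G1.compl_adj _ _).mp hadj).2 (hJ1.1 (vmem b) haJ hne)
      · obtain ⟨⟨i, rfl⟩, -⟩ := hadj
        exact hbI (hvI1 i)
      · have hne : a ≠ b := fun h => hxy (by rw [h])
        exact ((G2.compl_adj _ _).mp hadj).2 (hJ2.1 ha hb hne)
      · exact hI2 ⟨b, rfl⟩ (usur a ha) hadj
      · have hne : v a ≠ b := fun h => hbI (h ▸ hvI1 a)
        exact ((G1.compl_adj _ _).mp hadj).2 (hJ1.1 (vmem a) hbJ hne)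
      · exact hI2 ⟨a, rfl⟩ (usur b hb) hadj
    have hI1sub : I1 ⊆ J1 := by
      intro a ha
      rw [hI1def] at ha
      obtain ⟨i, -, rfl⟩ := Finset.mem_image.mp ha
      exact vmem i
    have hI1card : I1.card = w2 := by
      rw [hI1def, Finset.card_image_of_injective _ vinj, Finset.card_univ, Fintype.card_fin]
    have d12 : Disjoint ((J1 \ I1).map (emb1 n1 n2 w2)) (J2.map (emb2 n1 n2 w2)) := by
      rw [Finset.disjoint_left]
      rintro x hx1 hx2
      obtain ⟨a, -, rfl⟩ := Finset.mem_map.mp hx1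
      obtain ⟨b, -, hb⟩ := Finset.mem_map.mp hx2
      exact absurd hb (by simp)
    have d123 : Disjoint (((J1 \ I1).map (emb1 n1 n2 w2)) ∪ (J2.map (emb2 n1 n2 w2)))
        (Finset.univ.map (emb3 n1 n2 w2)) := by
      rw [Finset.disjoint_left]
      rintro x hx1 hx2
      obtain ⟨b, -, hb⟩ := Finset.mem_map.mp hx2
      rcases Finset.mem_union.mp hx1 with h' | h'
      · obtain ⟨a, -, rfl⟩ := Finset.mem_map.mp h'
        exact absurd hb (by simp)
      · obtain ⟨a, -, rfl⟩ := Finset.mem_map.mp h'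
        exact absurd hb (by simp)
    have hcard : S0.card = w1 + w2 := by
      rw [hS0, Finset.card_union_of_disjoint d123, Finset.card_union_of_disjoint d12,
        Finset.card_map, Finset.card_map, Finset.card_map, Finset.card_sdiff_of_subset hI1sub,
        hJ1card, hJ2card, hI1card, Finset.card_univ, Fintype.card_fin]
      omega
    calc w1 + w2 = S0.card := hcard.symm
    _ ≤ Fᶜ.cliqueNum := hclique.card_le_cliqueNum
  -- Claim C : Fᶜ.cliqueNum ≤ w1 + w2
  have claimC : Fᶜ.cliqueNum ≤ w1 + w2 := by
    obtain ⟨s, hs⟩ := Fᶜ.exists_isNClique_cliqueNum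
    rw [← hs.2]
    set S1 : Finset (Fin n1) := s.preimage (emb1 n1 n2 w2) ((emb1 n1 n2 w2).injective.injOn)
      with hS1
    set S2 : Finset (Fin n2) := s.preimage (emb2 n1 n2 w2) ((emb2 n1 n2 w2).injective.injOn)
      with hS2
    set C : Finset (Fin w2) := s.preimage (emb3 n1 n2 w2) ((emb3 n1 n2 w2).injective.injOn)
      with hC
    have hmem1 : ∀ a, a ∈ S1 ↔ (Sum.inl (Sum.inl a) : (Fin n1 ⊕ Fin n2) ⊕ Fin w2) ∈ s :=
      fun a => Finset.mem_preimage
    have hmem2 : ∀ a, a ∈ S2 ↔ (Sum.inl (Sum.inr a) : (Fin n1 ⊕ Fin n2) ⊕ Fin w2) ∈ s :=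
      fun a => Finset.mem_preimage
    have hmem3 : ∀ a, a ∈ C ↔ (Sum.inr a : (Fin n1 ⊕ Fin n2) ⊕ Fin w2) ∈ s :=
      fun a => Finset.mem_preimage
    have hseq : s = (S1.map (emb1 n1 n2 w2)) ∪ (S2.map (emb2 n1 n2 w2)) ∪
        (C.map (emb3 n1 n2 w2)) := by
      ext x
      constructor
      · intro hx
        rcases x with ((a|a)|a)
        · exact Finset.mem_union.mpr (Or.inl (Finset.mem_union.mpr (Or.inl
            (Finset.mem_map.mpr ⟨a, (hmem1 a).mpr hx, rfl⟩))))
        · exact Finset.mem_union.mpr (Or.inl (Finset.mem_union.mpr (Or.inr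
            (Finset.mem_map.mpr ⟨a, (hmem2 a).mpr hx, rfl⟩))))
        · exact Finset.mem_union.mpr (Or.inr (Finset.mem_map.mpr ⟨a, (hmem3 a).mpr hx, rfl⟩))
      · intro hx
        rcases Finset.mem_union.mp hx with h' | h'
        · rcases Finset.mem_union.mp h' with h'' | h''
          · obtain ⟨a, ha, rfl⟩ := Finset.mem_map.mp h''
            exact (hmem1 a).mp ha
          · obtain ⟨a, ha, rfl⟩ := Finset.mem_map.mp h''
            exact (hmem2 a).mp ha
        · obtain ⟨a, ha, rfl⟩ := Finset.mem_map.mp h'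
          exact (hmem3 a).mp ha
    have d12 : Disjoint (S1.map (emb1 n1 n2 w2)) (S2.map (emb2 n1 n2 w2)) := by
      rw [Finset.disjoint_left]
      rintro x hx1 hx2
      obtain ⟨a, -, rfl⟩ := Finset.mem_map.mp hx1
      obtain ⟨b, -, hb⟩ := Finset.mem_map.mp hx2
      exact absurd hb (by simp)
    have d123 : Disjoint ((S1.map (emb1 n1 n2 w2)) ∪ (S2.map (emb2 n1 n2 w2)))
        (C.map (emb3 n1 n2 w2)) := by
      rw [Finset.disjoint_left]
      rintro x hx1 hx2
      obtain ⟨b, -, hb⟩ := Finset.mem_map.mp hx2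
      rcases Finset.mem_union.mp hx1 with h' | h'
      · obtain ⟨a, -, rfl⟩ := Finset.mem_map.mp h'
        exact absurd hb (by simp)
      · obtain ⟨a, -, rfl⟩ := Finset.mem_map.mp h'
        exact absurd hb (by simp)
    have hscard : s.card = S1.card + S2.card + C.card := by
      rw [hseq, Finset.card_union_of_disjoint d123, Finset.card_union_of_disjoint d12,
        Finset.card_map, Finset.card_map, Finset.card_map]
    -- adjacency consequences
    have hnotF : ∀ {x y}, x ∈ s → y ∈ s → x ≠ y → ¬ F.Adj x y := by
      intro x y hx hy hne
      exact ((SimpleGraph.compl_adj F x y).mp (hs.1 hx hy hne)).2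
    have f1 : ∀ {a b}, a ∈ S1 → b ∈ S1 → a ≠ b → G1.Adj a b := by
      intro a b ha hb hne
      have := hnotF ((hmem1 a).mp ha) ((hmem1 b).mp hb) (by simp [hne])
      simp only [hF, FG, FAdj] at this
      exact toAdj1 this hne
    have f2 : ∀ {a b}, a ∈ S2 → b ∈ S2 → a ≠ b → G2.Adj a b := by
      intro a b ha hb hne
      have := hnotF ((hmem2 a).mp ha) ((hmem2 b).mp hb) (by simp [hne])
      simp only [hF, FG, FAdj] at this
      exact toAdj2 this hne
    have fcross : ∀ {a b}, a ∈ S1 → b ∈ S2 → ¬((∃ i, v i = a) ∧ (∃ j, u j = b)) := by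
      intro a b ha hb
      have := hnotF ((hmem1 a).mp ha) ((hmem2 b).mp hb) (by simp)
      simpa only [hF, FG, FAdj] using this
    have fR1 : ∀ {i a}, i ∈ C → a ∈ S1 → ¬ G1ᶜ.Adj (v i) a := by
      intro i a hi ha
      have := hnotF ((hmem3 i).mp hi) ((hmem1 a).mp ha) (by simp)
      simpa only [hF, FG, FAdj] using this
    have fR2 : ∀ {i b}, i ∈ C → b ∈ S2 → ¬ G2ᶜ.Adj (u i) b := by
      intro i b hi hb
      have := hnotF ((hmem3 i).mp hi) ((hmem2 b).mp hb) (by simp)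
      simpa only [hF, FG, FAdj] using this
    -- the unions with the special vertices are cliques
    have hS1clique : G1.IsClique (↑(S1 ∪ C.image v) : Set (Fin n1)) := by
      intro a ha b hb hne
      simp only [Finset.coe_union, Set.mem_union, Finset.mem_coe, Finset.coe_image,
        Set.mem_image] at ha hb
      rcases ha with ha | ⟨i, hi, rfl⟩ <;> rcases hb with hb | ⟨j, hj, rfl⟩
      · exact f1 ha hb hne
      · exact (toAdj1 (fR1 hj ha) (fun h => hne h.symm)).symm
      · exact toAdj1 (fR1 hi hb) hne
      · exact hJ1.1 (vmem i) (vmem j) hne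
    have hS2clique : G2.IsClique (↑(S2 ∪ C.image u) : Set (Fin n2)) := by
      intro a ha b hb hne
      simp only [Finset.coe_union, Set.mem_union, Finset.mem_coe, Finset.coe_image,
        Set.mem_image] at ha hb
      rcases ha with ha | ⟨i, hi, rfl⟩ <;> rcases hb with hb | ⟨j, hj, rfl⟩
      · exact f2 ha hb hne
      · exact (toAdj2 (fR2 hj ha) (fun h => hne h.symm)).symm
      · exact toAdj2 (fR2 hi hb) hne
      · exact hJ2.1 (umem i) (umem j) hne
    have hb1 : (S1 ∪ C.image v).card ≤ w1 := by
      have := hS1clique.card_le_cliqueNum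
      rwa [hw1] at this
    have hb2 : (S2 ∪ C.image u).card ≤ w2 := by
      have := hS2clique.card_le_cliqueNum
      rwa [hw2] at this
    have hS1card : S1.card ≤ w1 := by
      have h' : G1.IsClique (↑S1 : Set (Fin n1)) := fun a ha b hb hne =>
        f1 (Finset.mem_coe.mp ha) (Finset.mem_coe.mp hb) hne
      have := h'.card_le_cliqueNum
      rwa [hw1] at this
    have hS2card : S2.card ≤ w2 := by
      have h' : G2.IsClique (↑S2 : Set (Fin n2)) := fun a ha b hb hne =>
        f2 (Finset.mem_coe.mp ha) (Finset.mem_coe.mp hb) hne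
      have := h'.card_le_cliqueNum
      rwa [hw2] at this
    by_cases hcase : ∃ i ∈ C, u i ∈ S2
    · obtain ⟨i0, hi0C, hi0S⟩ := hcase
      have hdisj : Disjoint S1 (C.image v) := by
        rw [Finset.disjoint_left]
        rintro a haS1 haIm
        obtain ⟨j, hj, rfl⟩ := Finset.mem_image.mp haIm
        exact fcross haS1 hi0S ⟨⟨j, rfl⟩, ⟨i0, rfl⟩⟩
      have hkey : S1.card + C.card ≤ w1 := by
        have hcc : (C.image v).card = C.card := Finset.card_image_of_injective _ vinj
        calc S1.card + C.card = S1.card + (C.image v).card := by rw [hcc]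
        _ = (S1 ∪ C.image v).card := (Finset.card_union_of_disjoint hdisj).symm
        _ ≤ w1 := hb1
      rw [hscard]
      omega
    · push_neg at hcase
      have hdisj : Disjoint S2 (C.image u) := by
        rw [Finset.disjoint_left]
        rintro b hbS2 hbIm
        obtain ⟨j, hj, rfl⟩ := Finset.mem_image.mp hbIm
        exact hcase j hj hbS2
      have hkey : S2.card + C.card ≤ w2 := by
        have hcc : (C.image u).card = C.card := Finset.card_image_of_injective _ uinj
        calc S2.card + C.card = S2.card + (C.image u).card := by rw [hcc]
        _ = (S2 ∪ C.image u).card := (Finset.card_union_of_disjoint hdisj).symm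
        _ ≤ w2 := hb2
      rw [hscard]
      omega
  -- transfer to Fin (n1 + n2 + w2)
  let e : Fin (n1 + n2 + w2) ≃ (Fin n1 ⊕ Fin n2) ⊕ Fin w2 :=
    ((Equiv.sumCongr finSumFinEquiv (Equiv.refl (Fin w2))).trans finSumFinEquiv).symm
  refine ⟨Fᶜ.comap e, ?_, ?_⟩
  · have hHc : (Fᶜ.comap (e : Fin (n1 + n2 + w2) → (Fin n1 ⊕ Fin n2) ⊕ Fin w2))ᶜ
        = F.comap (e : Fin (n1 + n2 + w2) → (Fin n1 ⊕ Fin n2) ⊕ Fin w2) := by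
      ext x y
      simp only [SimpleGraph.compl_adj, SimpleGraph.comap_adj]
      constructor
      · rintro ⟨hxy, h⟩
        have hne : e x ≠ e y := fun hh => hxy (e.injective hh)
        by_contra hA
        exact h ((F.compl_adj _ _).mpr ⟨hne, hA⟩)
      · intro hA
        refine ⟨fun hh => ?_, fun hc => ((F.compl_adj _ _).mp hc).2 hA⟩
        rw [hh] at hA
        exact F.loopless.irrefl _ hA
    rw [hHc, cliqueNum_comap F e]
    exact claimA
  · rw [cliqueNum_comap Fᶜ e]
    omega
end

section
/- If a graph G on n vertices has no clique of size t (for a fixed integer t ≥ 2), then its independence number satisfies α(G) ≥ c·n^{1/(t-1)} for some constant c > 0 depending only on t; consequently lim_{n→∞} Q(n, ⌈tn⌉) = ∞ for fixed 0 < t ≤ 1/2. -/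
open SimpleGraph

section Aux

lemma my_ramsey : ∀ n s t : ℕ, s + t = n → ∀ {V : Type} (G : SimpleGraph V) (A : Finset V),
    Nat.choose (s + t) s ≤ A.card →
    (∃ B ⊆ A, Gᶜ.IsNClique (s + 1) B) ∨ (∃ B ⊆ A, G.IsNClique (t + 1) B) := by
  intro n
  induction n using Nat.strong_induction_on with
  | _ n ih =>
    intro s t hst V G A hA
    classical
    have hApos : 0 < A.card := lt_of_lt_of_le (Nat.choose_pos (by omega)) hA
    obtain ⟨a, ha⟩ := Finset.card_pos.mp hApos
    match s, t with
    | 0, t =>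
      exact Or.inl ⟨{a}, by simpa using ha, by simp⟩
    | s + 1, 0 =>
      exact Or.inr ⟨{a}, by simpa using ha, by simp⟩
    | s + 1, t + 1 =>
      set N := (A.erase a).filter (fun b => G.Adj a b) with hN
      set M := (A.erase a).filter (fun b => ¬ G.Adj a b) with hM
      have hNM : N.card + M.card = A.card - 1 := by
        rw [hN, hM, Finset.card_filter_add_card_filter_not, Finset.card_erase_of_mem ha]
      have hpascal : Nat.choose (s + 1 + (t + 1)) (s + 1)
          = Nat.choose (s + 1 + t) s + Nat.choose (s + 1 + t) (s + 1) := by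
        have : s + 1 + (t + 1) = (s + 1 + t) + 1 := by omega
        rw [this, Nat.choose_succ_succ' (s + 1 + t) s]
      have hcase : Nat.choose (s + (t + 1)) s ≤ M.card ∨
          Nat.choose (s + 1 + t) (s + 1) ≤ N.card := by
        by_contra hcon
        push_neg at hcon
        have h1 : Nat.choose (s + (t + 1)) s = Nat.choose (s + 1 + t) s := by
          rw [show s + (t + 1) = s + 1 + t by omega]
        omega
      rcases hcase with hMc | hNc
      · rcases ih (s + (t + 1)) (by omega) s (t + 1) rfl G M hMc with ⟨B, hBM, hB⟩ | h
        · refine Or.inl ⟨insert a B, ?_, ?_⟩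
          · intro x hx
            rcases Finset.mem_insert.mp hx with rfl | hx
            · exact ha
            · exact (Finset.mem_of_mem_erase (Finset.mem_of_mem_filter _ (hBM hx)))
          · refine hB.insert fun b hb => ?_
            have hbM := hBM hb
            rw [hM, Finset.mem_filter] at hbM
            refine ⟨(Finset.ne_of_mem_erase hbM.1).symm, hbM.2⟩
        · rcases h with ⟨B, hBM, hB⟩
          exact Or.inr ⟨B, fun x hx =>
            Finset.mem_of_mem_erase (Finset.mem_of_mem_filter _ (hBM hx)), hB⟩
      · rcases ih (s + 1 + t) (by omega) (s + 1) t rfl G N hNc with ⟨B, hBN, hB⟩ | ⟨B, hBN, hB⟩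
        · exact Or.inl ⟨B, fun x hx =>
            Finset.mem_of_mem_erase (Finset.mem_of_mem_filter _ (hBN hx)), hB⟩
        · refine Or.inr ⟨insert a B, ?_, ?_⟩
          · intro x hx
            rcases Finset.mem_insert.mp hx with rfl | hx
            · exact ha
            · exact Finset.mem_of_mem_erase (Finset.mem_of_mem_filter _ (hBN hx))
          · refine hB.insert fun b hb => ?_
            have hbN := hBN hb
            rw [hN, Finset.mem_filter] at hbN
            exact hbN.2

lemma core_nat {V : Type} [Fintype V] (G : SimpleGraph V) (w : ℕ)
    (hfree : ¬ ∃ B : Finset V, G.IsNClique (w + 1) B) :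
    Fintype.card V < Nat.choose (_root_.indepNum G + w) (_root_.indepNum G) := by
  by_contra h
  push_neg at h
  rcases my_ramsey (_root_.indepNum G + w) (_root_.indepNum G) w rfl G Finset.univ
      (by simpa using h) with ⟨B, _, hB⟩ | ⟨B, _, hB⟩
  · have h1 : B.card ≤ Gᶜ.cliqueNum := IsClique.card_le_cliqueNum (tc := hB.1)
    rw [hB.2] at h1
    simp only [_root_.indepNum] at h1
    omega
  · exact hfree ⟨B, hB⟩

lemma core_real {V : Type} [Fintype V] (G : SimpleGraph V) (t : ℕ) (ht : 2 ≤ t)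
    (hfree : ¬ ∃ B : Finset V, G.IsNClique t B) :
    (1 / (t : ℝ)) * (Fintype.card V : ℝ) ^ ((1 : ℝ) / ((t : ℝ) - 1)) ≤ _root_.indepNum G := by
  set w : ℕ := t - 1 with hwdef
  have hwt : t = w + 1 := by omega
  have hw1 : 1 ≤ w := by omega
  set α : ℕ := _root_.indepNum G with hα
  have htR : (0:ℝ) < t := by positivity
  have hw' : ((t:ℝ) - 1) = (w : ℕ) := by rw [hwt]; push_cast; ring
  rcases Nat.eq_zero_or_pos (Fintype.card V) with hc0 | hcpos
  · rw [hc0]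
    rw [Nat.cast_zero, Real.zero_rpow (by rw [hw']; positivity), mul_zero]
    positivity
  · have : Nonempty V := Fintype.card_pos_iff.mp hcpos
    obtain ⟨v⟩ := this
    have hαpos : 1 ≤ α := by
      have h1 : Gᶜ.IsNClique 1 {v} := by simp
      have := IsClique.card_le_cliqueNum (G := Gᶜ) (t := {v}) (tc := h1.1)
      simpa [hα, _root_.indepNum] using this
    have hlt : Fintype.card V < Nat.choose (α + w) α := by
      rw [hwt] at hfree; exact core_nat G w hfree
    have hle : Nat.choose (α + w) α ≤ (t * α) ^ w := by
      calc Nat.choose (α + w) α = Nat.choose (α + w) w := Nat.choose_symm_add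
        _ ≤ (α + w) ^ w := Nat.choose_le_pow _ _
        _ ≤ (t * α) ^ w := by
            apply Nat.pow_le_pow_left
            calc α + w ≤ α + w * α := by nlinarith
              _ = (w + 1) * α := by ring
              _ = t * α := by rw [hwt]
    have hnR : (Fintype.card V : ℝ) ≤ ((t * α : ℕ) : ℝ) ^ (w : ℕ) := by
      exact_mod_cast le_trans (le_of_lt hlt) hle
    have hM : (0:ℝ) ≤ ((t * α : ℕ) : ℝ) := by positivity
    have key : (Fintype.card V : ℝ) ^ ((1 : ℝ) / ((t : ℝ) - 1)) ≤ ((t * α : ℕ) : ℝ) := by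
      have h2 : (Fintype.card V : ℝ) ^ ((1 : ℝ) / ((t : ℝ) - 1))
          ≤ (((t * α : ℕ) : ℝ) ^ (w : ℕ)) ^ ((1 : ℝ) / ((t : ℝ) - 1)) :=
        Real.rpow_le_rpow (by positivity) hnR (by rw [hw']; positivity)
      calc (Fintype.card V : ℝ) ^ ((1 : ℝ) / ((t : ℝ) - 1))
          ≤ (((t * α : ℕ) : ℝ) ^ (w : ℕ)) ^ ((1 : ℝ) / ((t : ℝ) - 1)) := h2
        _ = ((t * α : ℕ) : ℝ) ^ ((w : ℝ) * ((1 : ℝ) / ((t : ℝ) - 1))) := by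
            rw [← Real.rpow_natCast ((t * α : ℕ) : ℝ) w, ← Real.rpow_mul hM]
        _ = ((t * α : ℕ) : ℝ) := by
            rw [hw', mul_one_div_cancel (Nat.cast_ne_zero.mpr (by omega) : ((w:ℕ):ℝ) ≠ 0)]
            exact Real.rpow_one _
    have : (Fintype.card V : ℝ) ^ ((1 : ℝ) / ((t : ℝ) - 1)) ≤ (t : ℝ) * (α : ℝ) := by
      push_cast at key; exact key
    calc (1 / (t : ℝ)) * (Fintype.card V : ℝ) ^ ((1 : ℝ) / ((t : ℝ) - 1))
        ≤ (1 / (t : ℝ)) * ((t : ℝ) * (α : ℝ)) := by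
          apply mul_le_mul_of_nonneg_left this (by positivity)
      _ = α := by field_simp

lemma arith_step (w : ℕ) (hw : 2 ≤ w) (m a : ℕ) (hm : 1 ≤ m) (ham : a ≤ m)
    (ha : (1 / ((w : ℝ) + 1)) * (m : ℝ) ^ ((1 : ℝ) / w) ≤ (a : ℝ)) :
    ((w : ℝ) * (w + 1)) * ((m - a : ℕ) : ℝ) ^ (((w : ℝ) - 1) / w) + 1
      ≤ ((w : ℝ) * (w + 1)) * (m : ℝ) ^ (((w : ℝ) - 1) / w) := by
  have hwR : (2 : ℝ) ≤ (w : ℝ) := by exact_mod_cast hw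
  set β : ℝ := ((w : ℝ) - 1) / w with hβ
  set x : ℝ := (m : ℝ) with hx
  set A : ℝ := (w : ℝ) * (w + 1) with hA
  have hx1 : (1 : ℝ) ≤ x := by rw [hx]; exact_mod_cast hm
  have hx0 : (0 : ℝ) < x := by linarith
  have haR : (a : ℝ) ≤ x := by rw [hx]; exact_mod_cast ham
  have ha0 : (0 : ℝ) ≤ (a : ℝ) := Nat.cast_nonneg a
  have hcast : ((m - a : ℕ) : ℝ) = x - (a : ℝ) := by
    rw [hx, Nat.cast_sub ham]
  have hβ0 : 0 ≤ β := by rw [hβ]; apply div_nonneg <;> linarith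
  have hβ1 : β ≤ 1 := by
    rw [hβ, div_le_one (by linarith)]; linarith
  rw [hcast]
  have hdiv1 : (a : ℝ) / x ≤ 1 := by rw [div_le_one hx0]; exact haR
  have h1 : (x - (a : ℝ)) ^ β ≤ x ^ β * (1 - β * ((a : ℝ) / x)) := by
    have hs : (-1 : ℝ) ≤ -((a : ℝ) / x) := by linarith
    have hb := rpow_one_add_le_one_add_mul_self hs hβ0 hβ1
    calc (x - (a : ℝ)) ^ β = (x * (1 - (a : ℝ) / x)) ^ β := by
          rw [mul_one_sub, mul_div_cancel₀ _ (ne_of_gt hx0)]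
      _ = x ^ β * (1 - (a : ℝ) / x) ^ β := Real.mul_rpow (le_of_lt hx0) (by linarith)
      _ ≤ x ^ β * (1 + β * -((a : ℝ) / x)) := by
          apply mul_le_mul_of_nonneg_left _ (Real.rpow_nonneg (le_of_lt hx0) β)
          calc (1 - (a : ℝ) / x) ^ β = (1 + -((a : ℝ) / x)) ^ β := by ring_nf
            _ ≤ 1 + β * -((a : ℝ) / x) := hb
      _ = x ^ β * (1 - β * ((a : ℝ) / x)) := by ring
  have hpow1 : x ^ ((1 : ℝ) / w) * x ^ (β - 1) = 1 := by
    rw [← Real.rpow_add hx0]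
    have : (1 : ℝ) / w + (β - 1) = 0 := by
      rw [hβ]; field_simp; ring
    rw [this, Real.rpow_zero]
  have hxb1 : x ^ (β - 1) = x ^ β / x := by
    rw [Real.rpow_sub hx0, Real.rpow_one]
  set u : ℝ := (a : ℝ) * x ^ (β - 1) with hu
  have hu0 : 0 ≤ u := by
    rw [hu]; exact mul_nonneg ha0 (Real.rpow_nonneg (le_of_lt hx0) _)
  have h2 : 1 / ((w : ℝ) + 1) ≤ u := by
    rw [hu]
    calc 1 / ((w : ℝ) + 1) = (1 / ((w : ℝ) + 1) * x ^ ((1 : ℝ) / w)) * x ^ (β - 1) := by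
          rw [mul_assoc, hpow1, mul_one]
      _ ≤ (a : ℝ) * x ^ (β - 1) :=
          mul_le_mul_of_nonneg_right ha (Real.rpow_nonneg (le_of_lt hx0) _)
  have h2' : 1 ≤ u * ((w : ℝ) + 1) := by
    rw [← div_le_iff₀ (by linarith : (0:ℝ) < (w:ℝ) + 1)]
    exact h2
  have hxb : x ^ β * ((a : ℝ) / x) = u := by
    rw [hu, hxb1]; field_simp
  have h1'' : (x - (a : ℝ)) ^ β ≤ x ^ β - β * u := by
    calc (x - (a : ℝ)) ^ β ≤ x ^ β * (1 - β * ((a : ℝ) / x)) := h1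
      _ = x ^ β - β * (x ^ β * ((a : ℝ) / x)) := by ring
      _ = x ^ β - β * u := by rw [hxb]
  have hkey : 1 ≤ A * (β * u) := by
    have hAβ : A * β = ((w : ℝ) + 1) * ((w : ℝ) - 1) := by
      rw [hA, hβ]; field_simp
    nlinarith [h2', hu0, hAβ, hwR]
  have hA0 : (0 : ℝ) ≤ A := by rw [hA]; positivity
  nlinarith [mul_le_mul_of_nonneg_left h1'' hA0, hkey]

lemma colorable_peel (w : ℕ) (hw : 2 ≤ w) :
    ∀ m : ℕ, ∀ (V : Type) (_ : Fintype V), Fintype.card V = m → ∀ G : SimpleGraph V,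
    (¬ ∃ B : Finset V, G.IsNClique (w + 1) B) →
    G.Colorable ⌈((w : ℝ) * (w + 1)) * (m : ℝ) ^ (((w : ℝ) - 1) / w)⌉₊ := by
  intro m
  induction m using Nat.strong_induction_on with
  | _ m ih =>
    intro V instV hcard G hfree
    classical
    rcases Nat.eq_zero_or_pos m with rfl | hm
    · have : IsEmpty V := Fintype.card_eq_zero_iff.mp hcard
      exact Colorable.of_isEmpty _
    · obtain ⟨S, hS⟩ := Gᶜ.exists_isNClique_cliqueNum
      set α := Gᶜ.cliqueNum with hαdef
      have hαcard : S.card = α := hS.2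
      have hαm : α ≤ m := by
        rw [← hcard, ← hαcard]
        exact le_trans (Finset.card_le_univ S) (le_of_eq Finset.card_univ)
      have hα_lb : (1 / ((w : ℝ) + 1)) * (m : ℝ) ^ ((1 : ℝ) / w) ≤ (α : ℝ) := by
        have h := core_real G (w + 1) (by omega) hfree
        rw [hcard] at h
        push_cast at h
        have hc2 : (w : ℝ) + 1 - 1 = (w : ℝ) := by ring
        rw [hc2] at h
        exact h
      have hα1 : 1 ≤ α := by
        by_contra hcon
        have : α = 0 := by omega
        rw [this] at hα_lb
        have hml : (1:ℝ) ≤ (m:ℝ) := by exact_mod_cast hm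
        have h1 : (1:ℝ) ≤ (m : ℝ) ^ ((1 : ℝ) / w) :=
          Real.one_le_rpow hml (by positivity)
        have h2 : (0:ℝ) < 1 / ((w : ℝ) + 1) := by positivity
        nlinarith
      set s : Set V := {v | v ∉ S} with hsdef
      have hfree' : ¬ ∃ B : Finset s, (G.induce s).IsNClique (w + 1) B := by
        rintro ⟨B, hB⟩
        refine hfree ⟨B.map (Function.Embedding.subtype _), ?_, ?_⟩
        · intro x hx y hy hxy
          obtain ⟨x', hx', rfl⟩ := Finset.mem_map.mp hx
          obtain ⟨y', hy', rfl⟩ := Finset.mem_map.mp hy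
          have hne : x' ≠ y' := fun h => hxy (by rw [h])
          exact hB.1 hx' hy' hne
        · rw [Finset.card_map, hB.2]
      have hcards : Fintype.card s = m - α := by
        have : Fintype.card s = Fintype.card {v // ¬ v ∈ S} := Fintype.card_congr (Equiv.refl _)
        rw [this, Fintype.card_subtype_compl, hcard]
        congr 1
        rw [← hαcard]
        exact Fintype.card_coe S
      have hcol := ih (m - α) (by omega) s (Subtype.fintype _) hcards (G.induce s) hfree'
      obtain ⟨C⟩ := hcol
      set k := ⌈((w : ℝ) * (w + 1)) * ((m - α : ℕ) : ℝ) ^ (((w : ℝ) - 1) / w)⌉₊ with hkdef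
      have hcolk1 : G.Colorable (k + 1) := by
        refine ⟨Coloring.mk (fun v => if h : v ∈ S then ⟨k, by omega⟩
          else (C ⟨v, h⟩).castSucc) ?_⟩
        intro u v hadj
        by_cases hu : u ∈ S <;> by_cases hv : v ∈ S
        · exfalso
          have := hS.1 hu hv (G.ne_of_adj hadj)
          rw [compl_adj] at this
          exact this.2 hadj
        · simp only [dif_pos hu, dif_neg hv]
          intro h
          have := congrArg Fin.val h
          simp [Fin.castSucc] at this
          have hlt := (C ⟨v, hv⟩).isLt
          omega
        · simp only [dif_neg hu, dif_pos hv]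
          intro h
          have := congrArg Fin.val h
          simp [Fin.castSucc] at this
          have hlt := (C ⟨u, hu⟩).isLt
          omega
        · simp only [dif_neg hu, dif_neg hv]
          intro h
          have hadj' : (G.induce s).Adj ⟨u, hu⟩ ⟨v, hv⟩ := hadj
          exact C.valid hadj' (Fin.castSucc_injective _ h)
      refine hcolk1.mono ?_
      have harith := arith_step w hw m α hm hαm hα_lb
      have h0 : (0:ℝ) ≤ ((w : ℝ) * (w + 1)) * ((m - α : ℕ) : ℝ) ^ (((w : ℝ) - 1) / w) := by
        positivity
      calc k + 1 = ⌈((w : ℝ) * (w + 1)) * ((m - α : ℕ) : ℝ) ^ (((w : ℝ) - 1) / w) + 1⌉₊ := by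
            rw [Nat.ceil_add_one h0]
        _ ≤ ⌈((w : ℝ) * (w + 1)) * (m : ℝ) ^ (((w : ℝ) - 1) / w)⌉₊ := Nat.ceil_le_ceil harith

lemma exists_chrom (n c : ℕ) (hc1 : 1 ≤ c) (hcn : c ≤ n) :
    ∃ G : SimpleGraph (Fin n), G.chromaticNumber = (c : ℕ∞) := by
  classical
  refine ⟨SimpleGraph.fromRel (fun i j => i.val < c ∧ j.val < c), ?_⟩
  set G := SimpleGraph.fromRel (fun i j : Fin n => i.val < c ∧ j.val < c) with hG
  have hupper : G.Colorable c := by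
    refine ⟨Coloring.mk (fun v => if h : v.val < c then ⟨v.val, h⟩ else ⟨0, hc1⟩) ?_⟩
    intro v w hadj
    rw [hG, fromRel_adj] at hadj
    obtain ⟨hne, hor⟩ := hadj
    have hv : v.val < c := by tauto
    have hw : w.val < c := by tauto
    simp only [dif_pos hv, dif_pos hw]
    intro h
    have : v.val = w.val := by simpa using h
    exact hne (Fin.ext this)
  have hlower : (c : ℕ∞) ≤ G.chromaticNumber := by
    have hclique : G.IsClique (Finset.univ.map (Fin.castLEEmb hcn)) := by
      intro x hx y hy hxy
      simp only [Finset.coe_map, Set.mem_image, Finset.mem_coe] at hx hy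
      obtain ⟨x', -, rfl⟩ := hx
      obtain ⟨y', -, rfl⟩ := hy
      rw [hG, fromRel_adj]
      refine ⟨hxy, Or.inl ⟨?_, ?_⟩⟩
      · exact x'.isLt
      · exact y'.isLt
    have := hclique.card_le_chromaticNumber
    simpa using this
  exact le_antisymm (hupper.chromaticNumber_le) hlower

end Aux

theorem stmt18 :
    (∀ t : ℕ, 2 ≤ t → ∃ c : ℝ, 0 < c ∧ ∀ n : ℕ, ∀ G : SimpleGraph (Fin n),
      (¬ ∃ s : Finset (Fin n), G.IsNClique t s) →
      c * (n : ℝ) ^ ((1 : ℝ) / ((t : ℝ) - 1)) ≤ _root_.indepNum G) ∧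
    (∀ t : ℝ, 0 < t → t ≤ 1 / 2 →
      Filter.Tendsto (fun n : ℕ => Q n ⌈t * n⌉₊) Filter.atTop Filter.atTop) := by
  constructor
  · intro t ht
    refine ⟨1 / (t : ℝ), by positivity, ?_⟩
    intro n G hfree
    have := core_real G t ht hfree
    rwa [Fintype.card_fin] at this
  · intro t ht ht2
    rw [Filter.tendsto_atTop]
    intro b
    set w : ℕ := max b 2 with hwdef
    have hw : 2 ≤ w := le_max_right _ _
    have hbw : b ≤ w := le_max_left _ _
    set β : ℝ := ((w : ℝ) - 1) / w with hβ
    set A : ℝ := (w : ℝ) * (w + 1) with hA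
    have hwR : (2:ℝ) ≤ (w:ℝ) := by exact_mod_cast hw
    have hβ1 : β - 1 < 0 := by
      rw [hβ]
      have : ((w : ℝ) - 1) / w < 1 := by
        rw [div_lt_one (by linarith)]; linarith
      linarith
    have htendA : Filter.Tendsto (fun n : ℕ => A * (n : ℝ) ^ (β - 1) + 1 / (n : ℝ))
        Filter.atTop (nhds 0) := by
      have h1 : Filter.Tendsto (fun x : ℝ => x ^ (β - 1)) Filter.atTop (nhds 0) := by
        have := tendsto_rpow_neg_atTop (y := 1 - β) (by linarith)
        simpa [show -(1 - β) = β - 1 by ring] using this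
      have h2 : Filter.Tendsto (fun n : ℕ => A * (n : ℝ) ^ (β - 1))
          Filter.atTop (nhds 0) := by
        have := (h1.comp (tendsto_natCast_atTop_atTop (R := ℝ))).const_mul A
        simpa using this
      have h3 : Filter.Tendsto (fun n : ℕ => 1 / (n : ℝ)) Filter.atTop (nhds 0) :=
        tendsto_one_div_atTop_nhds_zero_nat
      simpa using h2.add h3
    have hev : ∀ᶠ n : ℕ in Filter.atTop, A * (n : ℝ) ^ (β - 1) + 1 / (n : ℝ) < t :=
      htendA.eventually_lt_const ht
    filter_upwards [hev, Filter.eventually_ge_atTop 1] with n hlt hn1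
    set c : ℕ := ⌈t * (n : ℕ)⌉₊ with hc
    have hn0 : (0:ℝ) < (n : ℝ) := by exact_mod_cast hn1
    have hc1 : 1 ≤ c := Nat.ceil_pos.mpr (by positivity)
    have hcn : c ≤ n := by
      rw [hc]
      apply Nat.ceil_le.mpr
      nlinarith
    -- key : A * n^β + 1 < t * n
    have hkey : A * (n : ℝ) ^ β + 1 < t * n := by
      have hmul := mul_lt_mul_of_pos_right hlt hn0
      have hexp : (n : ℝ) ^ (β - 1) * n = (n : ℝ) ^ β := by
        rw [Real.rpow_sub hn0, Real.rpow_one]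
        field_simp
      have heq : (A * (n : ℝ) ^ (β - 1) + 1 / (n : ℝ)) * n = A * (n : ℝ) ^ β + 1 := by
        rw [add_mul, mul_assoc, hexp, one_div, inv_mul_cancel₀ (ne_of_gt hn0)]
      linarith
    apply le_csInf
    · obtain ⟨G, hG⟩ := exists_chrom n c hc1 hcn
      exact ⟨G.cliqueNum, G, hG, rfl⟩
    · rintro x ⟨G, hχ, rfl⟩
      by_cases hex : ∃ B : Finset (Fin n), G.IsNClique (w + 1) B
      · obtain ⟨B, hB⟩ := hex
        have h1 : B.card ≤ G.cliqueNum := IsClique.card_le_cliqueNum (tc := hB.1)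
        rw [hB.2] at h1
        omega
      · exfalso
        have hcol := colorable_peel w hw n (Fin n) inferInstance (Fintype.card_fin n) G hex
        set k : ℕ := ⌈A * (n : ℝ) ^ β⌉₊ with hk
        have hchrom_le : G.chromaticNumber ≤ (k : ℕ∞) := hcol.chromaticNumber_le
        rw [hχ] at hchrom_le
        have hck : c ≤ k := by exact_mod_cast hchrom_le
        have hkc : k < c := by
          have h1 : (k : ℝ) < A * (n : ℝ) ^ β + 1 := Nat.ceil_lt_add_one (by positivity)
          have h2 : t * n ≤ (c : ℝ) := Nat.le_ceil _
          have : (k : ℝ) < (c : ℝ) := by linarith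
          exact_mod_cast this
        omega
end
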